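/- arXiv:2605.22307 — 8 statements merged into one kernel-verified Lean document; each statement's English description precedes it below -/
import Mathlib

section
/- Let n ≥ 3 and let x = (i,j), y = (i',j') be vertices of K_n × K_n with i ≠ i' and j ≠ j'. Then Δ_s(x,y) = 1 if s ∈ (L_i^j ∪ L_{i'}^{j'}) \ {(i,j'), (i',j)}, and Δ_s(x,y) = 0 otherwise. Moreover the set (L_i^j ∪ L_{i'}^{j'}) \ {(i,j'), (i',j)} has exactly 4n − 6 elements. -/
open Finset

/-- Distance in the direct product `K_n × K_n` (per the distance formula):
`0` if equal, `1` if the two vertices differ in both coordinates, `2` otherwise. -/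
def dd {n : ℕ} (x y : Fin n × Fin n) : ℕ :=
  if x = y then 0 else if x.1 ≠ y.1 ∧ x.2 ≠ y.2 then 1 else 2

/-- `Δ_S(x,y) = Σ_{z ∈ S} |d(x,z) − d(y,z)|`. -/
def delS {n : ℕ} (S : Finset (Fin n × Fin n)) (x y : Fin n × Fin n) : ℕ :=
  ∑ z ∈ S, ((dd x z : ℤ) - (dd y z : ℤ)).natAbs

/-- `S` is a weak `k`-resolving set. -/
def weakRes {n : ℕ} (k : ℕ) (S : Finset (Fin n × Fin n)) : Prop :=
  ∀ x y : Fin n × Fin n, x ≠ y → k ≤ delS S x y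

/-- The weak `k`-metric dimension of `K_n × K_n`. -/
noncomputable def wdim (n k : ℕ) : ℕ :=
  sInf {m | ∃ S : Finset (Fin n × Fin n), weakRes k S ∧ S.card = m}

/-- Vertical layer `L_i`. -/
def Lv {n : ℕ} (i : Fin n) : Finset (Fin n × Fin n) := univ.filter (fun p => p.1 = i)

/-- Horizontal layer `L^j`. -/
def Lh {n : ℕ} (j : Fin n) : Finset (Fin n × Fin n) := univ.filter (fun p => p.2 = j)

/-- Intersecting layers `L_i^j = L_i ∪ L^j`. -/
def Lij {n : ℕ} (i j : Fin n) : Finset (Fin n × Fin n) := Lv i ∪ Lh j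

theorem stmt_2 (n : ℕ) (hn : 3 ≤ n) (x y : Fin n × Fin n)
    (h1 : x.1 ≠ y.1) (h2 : x.2 ≠ y.2) :
    (∀ s : Fin n × Fin n,
      (s ∈ (Lij x.1 x.2 ∪ Lij y.1 y.2) \ {(x.1, y.2), (y.1, x.2)} →
        ((dd x s : ℤ) - (dd y s : ℤ)).natAbs = 1) ∧
      (s ∉ (Lij x.1 x.2 ∪ Lij y.1 y.2) \ {(x.1, y.2), (y.1, x.2)} →
        ((dd x s : ℤ) - (dd y s : ℤ)).natAbs = 0)) ∧
    ((Lij x.1 x.2 ∪ Lij y.1 y.2) \ {(x.1, y.2), (y.1, x.2)}).card = 4 * n - 6 := by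
  obtain ⟨a, b⟩ := x
  obtain ⟨c, d⟩ := y
  simp only at h1 h2
  constructor
  · intro ⟨u, v⟩
    simp only [Lij, Lv, Lh, mem_sdiff, mem_union, mem_filter, mem_univ, true_and,
      mem_insert, mem_singleton, Prod.mk.injEq, not_or]
    by_cases hau : u = a <;> by_cases hbv : v = b <;> by_cases hcu : u = c <;>
      by_cases hdv : v = d <;> subst_vars <;> simp_all [dd, Prod.ext_iff, eq_comm]
  · have hset : ((Lij a b ∪ Lij c d) : Finset (Fin n × Fin n)) =
        univ.filter (fun s => s.1 = a ∨ s.2 = b ∨ s.1 = c ∨ s.2 = d) := by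
      ext s; simp [Lij, Lv, Lh]; try tauto
    have hcompl : (univ.filter (fun s : Fin n × Fin n => ¬(s.1 = a ∨ s.2 = b ∨ s.1 = c ∨ s.2 = d))) =
        ((univ \ {a, c}) ×ˢ (univ \ {b, d})) := by
      ext s; simp; tauto
    have hc2 : ((univ \ {a, c} : Finset (Fin n))).card = n - 2 := by
      rw [card_sdiff_of_subset (by simp)]
      simp [card_insert_of_notMem, h1]
    have hd2 : ((univ \ {b, d} : Finset (Fin n))).card = n - 2 := by
      rw [card_sdiff_of_subset (by simp)]
      simp [card_insert_of_notMem, h2]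
    have hsum := card_filter_add_card_filter_not
      (s := (univ : Finset (Fin n × Fin n)))
      (p := fun s => s.1 = a ∨ s.2 = b ∨ s.1 = c ∨ s.2 = d)
    rw [hcompl] at hsum
    rw [card_product, hc2, hd2] at hsum
    have huniv : (univ : Finset (Fin n × Fin n)).card = n * n := by simp
    rw [huniv] at hsum
    have hsub : ({(a, d), (c, b)} : Finset (Fin n × Fin n)) ⊆ (Lij a b ∪ Lij c d) := by
      intro s hs
      simp only [mem_insert, mem_singleton] at hs
      rcases hs with rfl | rfl <;> simp [Lij, Lv, Lh]
    rw [card_sdiff_of_subset hsub, hset]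
    have hpq : ({(a, d), (c, b)} : Finset (Fin n × Fin n)).card = 2 := by
      rw [card_insert_of_notMem (by simp [h1]), card_singleton]
    rw [hpq]
    have key : (m : ℕ) → n = m + 3 → n * n - (n - 2) * (n - 2) = 4 * n - 4 := by
      intro m hm
      subst hm
      have h3 : (m + 3) * (m + 3) = (m + 1) * (m + 1) + (4 * m + 8) := by ring
      simp only [show m + 3 - 2 = m + 1 from rfl, h3, Nat.add_sub_cancel_left]
      omega
    have := key (n - 3) (by omega)
    omega
end

section
/- For every integer n ≥ 3, the quantity κ(K_n × K_n) = min over distinct vertex pairs x,y of Δ(x,y) equals 6 when n = 3, and equals 2n + 2 when n ≥ 4, where Δ(x,y) = Σ_{z ∈ V} |d(x,z) − d(y,z)|. -/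
open Finset

lemma key1 {n : ℕ} (a b d : Fin n) (hbd : b ≠ d) :
    delS Finset.univ (a,b) (a,d) = 2*n+2 := by
  unfold delS
  rw [Fintype.sum_prod_type]
  have hpt : ∀ p q : Fin n,
      ((dd (a,b) (p,q) : ℤ) - (dd (a,d) (p,q) : ℤ)).natAbs =
        (if q = b then (if p = a then 2 else 1) else 0) +
        (if q = d then (if p = a then 2 else 1) else 0) := by
    intro p q
    by_cases hp : p = a <;> by_cases hb : q = b <;> by_cases hd : q = d <;>
      simp [dd, Prod.ext_iff, hp, hb, hd, hbd, Ne.symm hbd] <;> omega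
  simp only [hpt]
  have h1 : ∀ w : ℕ, ∑ q : Fin n, (if q = b then w else 0) = w := by
    intro w; simp [Finset.sum_ite_eq']
  have h2 : ∀ w : ℕ, ∑ q : Fin n, (if q = d then w else 0) = w := by
    intro w; simp [Finset.sum_ite_eq']
  simp only [Finset.sum_add_distrib, h1, h2]
  have : ∑ p : Fin n, (if p = a then 2 else 1) = n + 1 := by
    have e : ∀ p : Fin n, (if p = a then 2 else 1) = (if p = a then 1 else 0) + 1 := by
      intro p; by_cases h : p = a <;> simp [h]
    simp only [e, Finset.sum_add_distrib]
    simp [Finset.sum_ite_eq']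
    omega
  omega

lemma delS_swap {n : ℕ} (x y : Fin n × Fin n) :
    delS Finset.univ x y = delS Finset.univ x.swap y.swap := by
  unfold delS
  apply Fintype.sum_equiv (Equiv.prodComm (Fin n) (Fin n))
  intro z
  have h : ∀ u : Fin n × Fin n, dd u.swap z.swap = dd u z := by
    intro u
    simp [dd, Prod.ext_iff, Prod.swap]
    by_cases h1 : u.1 = z.1 <;> by_cases h2 : u.2 = z.2 <;> simp [h1, h2] <;> tauto
  simp only [Equiv.prodComm_apply]
  rw [h x, h y]

lemma key2 {n : ℕ} (a b c : Fin n) (hac : a ≠ c) :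
    delS Finset.univ (a,b) (c,b) = 2*n+2 := by
  rw [delS_swap]
  exact key1 b a c hac

lemma key3 {n : ℕ} (hn : 3 ≤ n) (a b c d : Fin n) (hac : a ≠ c) (hbd : b ≠ d) :
    delS Finset.univ (a,b) (c,d) = 4*n-6 := by
  unfold delS
  rw [Fintype.sum_prod_type]
  have hpt : ∀ p q : Fin n,
      ((dd (a,b) (p,q) : ℤ) - (dd (c,d) (p,q) : ℤ)).natAbs =
        if p = a then (if q = d then 0 else 1)
        else if p = c then (if q = b then 0 else 1)
        else (if q = b then 1 else 0) + (if q = d then 1 else 0) := by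
    intro p q
    by_cases hp : p = a <;> by_cases hp' : p = c <;> by_cases hb : q = b <;>
      by_cases hd : q = d <;>
      simp [dd, Prod.ext_iff, hp, hp', hb, hd, hbd, hac, Ne.symm hbd, Ne.symm hac] <;>
      first | omega | (exfalso; apply hac; rw [← hp, hp'])
  simp only [hpt]
  have hc : ∀ e : Fin n, ∑ q : Fin n, (if q = e then (0:ℕ) else 1) = n - 1 := by
    intro e
    have h1 : ∑ q : Fin n, (if q = e then (0:ℕ) else 1) + ∑ q : Fin n, (if q = e then (1:ℕ) else 0) = n := by
      rw [← Finset.sum_add_distrib]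
      have : ∀ q : Fin n, ((if q = e then (0:ℕ) else 1) + (if q = e then (1:ℕ) else 0)) = 1 := by
        intro q; by_cases h : q = e <;> simp [h]
      simp [this]
    have h2 : ∑ q : Fin n, (if q = e then (1:ℕ) else 0) = 1 := by simp [Finset.sum_ite_eq']
    omega
  have hcc : ∀ e : Fin n, ∑ q : Fin n, (if q = e then (1:ℕ) else 0) = 1 := by
    intro e; simp [Finset.sum_ite_eq']
  have houter : ∀ p : Fin n,
      (if p = a then (∑ q : Fin n, if q = d then (0:ℕ) else 1)
        else if p = c then (∑ q : Fin n, if q = b then (0:ℕ) else 1)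
        else ∑ q : Fin n, ((if q = b then (1:ℕ) else 0) + (if q = d then 1 else 0))) =
      2 + (if p = a then n - 3 else 0) + (if p = c then n - 3 else 0) := by
    intro p
    by_cases hp : p = a <;> by_cases hp' : p = c
    · exact absurd (hp ▸ hp') hac
    · simp [hp, hp', hc, hac]; omega
    · simp [hp, hp', hc, Ne.symm hac]; omega
    · simp [hp, hp', Finset.sum_add_distrib, hcc]
  have hsum : ∀ p : Fin n, (if p = a then (∑ q : Fin n, if q = d then (0:ℕ) else 1)
        else if p = c then (∑ q : Fin n, if q = b then (0:ℕ) else 1)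
        else ∑ q : Fin n, ((if q = b then (1:ℕ) else 0) + (if q = d then 1 else 0))) =
        (if p = a then (∑ q : Fin n, if q = d then (0:ℕ) else 1)
        else if p = c then (∑ q : Fin n, if q = b then (0:ℕ) else 1)
        else ∑ q : Fin n, ((if q = b then (1:ℕ) else 0) + (if q = d then 1 else 0))) := fun _ => rfl
  calc (∑ p : Fin n, ∑ q : Fin n,
        (if p = a then (if q = d then (0:ℕ) else 1)
        else if p = c then (if q = b then 0 else 1)
        else (if q = b then 1 else 0) + (if q = d then 1 else 0)))
      = ∑ p : Fin n, (2 + (if p = a then n - 3 else 0) + (if p = c then n - 3 else 0)) := by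
        apply Finset.sum_congr rfl
        intro p _
        rw [← houter p]
        by_cases hp : p = a <;> by_cases hp' : p = c <;> simp [hp, hp']
    _ = 4*n - 6 := by
        simp only [Finset.sum_add_distrib]
        simp [Finset.sum_ite_eq']
        omega


theorem stmt_3 (n : ℕ) (hn : 3 ≤ n) :
    sInf {m | ∃ x y : Fin n × Fin n, x ≠ y ∧ delS Finset.univ x y = m} =
      if n = 3 then 6 else 2 * n + 2 := by
  have h01 : (⟨0, by omega⟩ : Fin n) ≠ ⟨1, by omega⟩ := by
    intro h; simpa using congrArg Fin.val h
  apply le_antisymm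
  · by_cases h3 : n = 3
    · subst h3
      simp only [if_pos rfl]
      apply Nat.sInf_le
      refine ⟨(⟨0, by omega⟩, ⟨0, by omega⟩), (⟨1, by omega⟩, ⟨1, by omega⟩), ?_, ?_⟩
      · intro h; exact h01 (congrArg Prod.fst h)
      · rw [key3 hn _ _ _ _ h01 h01]; simp
    · simp only [if_neg h3]
      apply Nat.sInf_le
      refine ⟨(⟨0, by omega⟩, ⟨0, by omega⟩), (⟨0, by omega⟩, ⟨1, by omega⟩), ?_, ?_⟩
      · intro h; exact h01 (congrArg Prod.snd h)
      · exact key1 _ _ _ h01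
  · apply le_csInf
    · exact ⟨_, (⟨0, by omega⟩, ⟨0, by omega⟩), (⟨0, by omega⟩, ⟨1, by omega⟩),
        (fun h => h01 (congrArg Prod.snd h)), rfl⟩
    rintro m ⟨x, y, hxy, rfl⟩
    obtain ⟨a, b⟩ := x
    obtain ⟨c, d⟩ := y
    by_cases hac : a = c
    · subst hac
      have hbd : b ≠ d := fun h => hxy (by rw [h])
      rw [key1 _ _ _ hbd]
      split <;> omega
    · by_cases hbd : b = d
      · subst hbd
        rw [key2 _ _ _ hac]
        split <;> omega
      · rw [key3 hn _ _ _ _ hac hbd]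
        split <;> omega
end

section
/- Let n ≥ 4, S a nonempty subset of V(K_n × K_n), and x = (i,j), y = (i',j) distinct vertices in the same horizontal layer (j = j', i ≠ i'). Then Δ_S(x,y) = |L_i ∩ S| + |L_{i'} ∩ S| + |{x,y} ∩ S|. -/
open Finset

theorem stmt_4 (n : ℕ) (hn : 4 ≤ n) (S : Finset (Fin n × Fin n)) (hS : S.Nonempty)
    (x y : Fin n × Fin n) (hj : x.2 = y.2) (hi : x.1 ≠ y.1) :
    delS S x y = (Lv x.1 ∩ S).card + (Lv y.1 ∩ S).card + (({x, y} : Finset _) ∩ S).card := by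
  have key : ∀ z ∈ S, ((dd x z : ℤ) - (dd y z : ℤ)).natAbs =
      (if z.1 = x.1 then 1 else 0) + (if z.1 = y.1 then 1 else 0) +
      (if z = x ∨ z = y then 1 else 0) := by
    intro z _
    obtain ⟨i, j⟩ := x
    obtain ⟨i', j'⟩ := y
    obtain ⟨a, b⟩ := z
    simp only at hj hi ⊢
    subst hj
    unfold dd
    rcases eq_or_ne a i with rfl | ha <;> rcases eq_or_ne a i' with rfl | ha' <;>
      rcases eq_or_ne b j with rfl | hb <;>
      simp_all [Prod.ext_iff] <;> omega
  have h1 : Lv x.1 ∩ S = S.filter (fun z => z.1 = x.1) := by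
    ext z; simp [Lv, and_comm]
  have h2 : Lv y.1 ∩ S = S.filter (fun z => z.1 = y.1) := by
    ext z; simp [Lv, and_comm]
  have h3 : ({x, y} : Finset _) ∩ S = S.filter (fun z => z = x ∨ z = y) := by
    ext z; simp [and_comm]
  rw [delS, Finset.sum_congr rfl key, Finset.sum_add_distrib, Finset.sum_add_distrib,
    h1, h2, h3, Finset.card_filter, Finset.card_filter, Finset.card_filter]
end

section
/- For every integer n ≥ 4, the weak 2-metric dimension of K_n × K_n equals n + ⌈n/3⌉. -/
open Finset

section basiclemmas
variable {n : ℕ} {x y z z₁ z₂ : Fin n × Fin n} {S : Finset (Fin n × Fin n)}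
lemma dd_self (x : Fin n × Fin n) : dd x x = 0 := by simp [dd]
lemma dd_one (h1 : x.1 ≠ y.1) (h2 : x.2 ≠ y.2) : dd x y = 1 := by
  have hne : x ≠ y := fun h => h1 (by rw [h])
  simp [dd, hne, h1, h2]
lemma dd_two_fst (hne : x ≠ y) (h : x.1 = y.1) : dd x y = 2 := by
  simp [dd, hne, h]
lemma dd_two_snd (hne : x ≠ y) (h : x.2 = y.2) : dd x y = 2 := by
  simp [dd, hne, h]
lemma dd_ne_one_fst (h : x.1 = z.1) : dd x z ≠ 1 := by
  by_cases hxz : x = z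
  · rw [hxz, dd_self]; omega
  · rw [dd_two_fst hxz h]; omega
lemma dd_ne_one_snd (h : x.2 = z.2) : dd x z ≠ 1 := by
  by_cases hxz : x = z
  · rw [hxz, dd_self]; omega
  · rw [dd_two_snd hxz h]; omega
lemma delS_comm : delS S x y = delS S y x := by
  unfold delS
  refine Finset.sum_congr rfl fun z _ => ?_
  omega
lemma two_le_delS_pair (hz₁ : z₁ ∈ S) (hz₂ : z₂ ∈ S) (hne : z₁ ≠ z₂)
    (h₁ : dd x z₁ ≠ dd y z₁) (h₂ : dd x z₂ ≠ dd y z₂) : 2 ≤ delS S x y := by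
  have hsub : {z₁, z₂} ⊆ S := by
    intro w hw
    rcases Finset.mem_insert.mp hw with h | h
    · rwa [h]
    · rw [Finset.mem_singleton.mp h]; exact hz₂
  have hle := Finset.sum_le_sum_of_subset (f := fun z => ((dd x z : ℤ) - (dd y z : ℤ)).natAbs) hsub
  rw [Finset.sum_pair hne] at hle
  have hle' : ((dd x z₁ : ℤ) - (dd y z₁ : ℤ)).natAbs + ((dd x z₂ : ℤ) - (dd y z₂ : ℤ)).natAbs
      ≤ delS S x y := by simpa [delS] using hle
  have e₁ : 1 ≤ ((dd x z₁ : ℤ) - (dd y z₁ : ℤ)).natAbs := by omega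
  have e₂ : 1 ≤ ((dd x z₂ : ℤ) - (dd y z₂ : ℤ)).natAbs := by omega
  omega
lemma two_le_delS_single (hz : z ∈ S) (h : 2 ≤ ((dd x z : ℤ) - (dd y z : ℤ)).natAbs) :
    2 ≤ delS S x y := by
  have h2 := Finset.single_le_sum (f := fun z => ((dd x z : ℤ) - (dd y z : ℤ)).natAbs)
    (fun i _ => Nat.zero_le _) hz
  have hle' : ((dd x z : ℤ) - (dd y z : ℤ)).natAbs ≤ delS S x y := by simpa [delS] using h2
  omega
end basiclemmas

def singleRow {n : ℕ} (S : Finset (Fin n × Fin n)) (i : Fin n) : Prop :=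
  ∀ z ∈ S, ∀ w ∈ S, z.1 = i → w.1 = i → z = w
def singleCol {n : ℕ} (S : Finset (Fin n × Fin n)) (j : Fin n) : Prop :=
  ∀ z ∈ S, ∀ w ∈ S, z.2 = j → w.2 = j → z = w
def bigRow {n : ℕ} (S : Finset (Fin n × Fin n)) (i : Fin n) : Prop :=
  ∃ z ∈ S, ∃ w ∈ S, z.1 = i ∧ w.1 = i ∧ z ≠ w
def bigCol {n : ℕ} (S : Finset (Fin n × Fin n)) (j : Fin n) : Prop :=
  ∃ z ∈ S, ∃ w ∈ S, z.2 = j ∧ w.2 = j ∧ z ≠ w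

section suff
variable {n : ℕ} {S : Finset (Fin n × Fin n)}

lemma bigCol_extra {j : Fin n} (hb : bigCol S j) (pt : Fin n × Fin n) :
    ∃ w ∈ S, w.2 = j ∧ w ≠ pt := by
  obtain ⟨u, hu, v, hv, hu2, hv2, huv⟩ := hb
  by_cases h : u = pt
  · exact ⟨v, hv, hv2, fun hv' => huv (h.trans hv'.symm)⟩
  · exact ⟨u, hu, hu2, h⟩

lemma bigRow_extra {i : Fin n} (hb : bigRow S i) (pt : Fin n × Fin n) :
    ∃ w ∈ S, w.1 = i ∧ w ≠ pt := by
  obtain ⟨u, hu, v, hv, hu1, hv1, huv⟩ := hb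
  by_cases h : u = pt
  · exact ⟨v, hv, hv1, fun hv' => huv (h.trans hv'.symm)⟩
  · exact ⟨u, hu, hu1, h⟩

lemma auxC (hrow : ∀ i, ∃ z ∈ S, z.1 = i)
    (hcol : ∀ j, ∃ z ∈ S, z.2 = j)
    (hpt : ∀ z ∈ S, (singleRow S z.1 ∧ bigCol S z.2) ∨ (bigRow S z.1 ∧ singleCol S z.2))
    (x y : Fin n × Fin n) (h1 : x.1 ≠ y.1) (h2 : x.2 ≠ y.2)
    (hex : ∃ z ∈ S, z.1 = x.1 ∧ z.2 ≠ y.2) : 2 ≤ delS S x y := by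
  obtain ⟨z₁, hz₁S, hz₁a, hz₁d⟩ := hex
  by_cases hexc : ∃ z ∈ S, z.1 = y.1 ∧ z.2 ≠ x.2
  · -- both rows have "extra" points
    obtain ⟨z₂, hz₂S, hz₂a, hz₂d⟩ := hexc
    refine two_le_delS_pair hz₁S hz₂S ?_ ?_ ?_
    · intro h; exact h1 (hz₁a ▸ hz₂a ▸ congrArg Prod.fst h)
    · rw [dd_one (fun h => h1 (hz₁a ▸ h).symm) (fun h => hz₁d h.symm)]
      exact dd_ne_one_fst hz₁a.symm
    · have e1 : dd x z₂ = 1 := dd_one (by rw [hz₂a]; exact h1) (fun h => hz₂d h.symm)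
      have e2 : dd y z₂ ≠ 1 := dd_ne_one_fst hz₂a.symm
      omega
  · -- row y.1 has only the point (y.1, x.2)
    push_neg at hexc
    obtain ⟨zc, hzcS, hzc1⟩ := hrow y.1
    have hzcx : zc = (y.1, x.2) := Prod.ext hzc1 (hexc zc hzcS hzc1)
    have hcbS : ((y.1, x.2) : Fin n × Fin n) ∈ S := hzcx ▸ hzcS
    have hsingc : ∀ z ∈ S, z.1 = y.1 → z = (y.1, x.2) :=
      fun z hz h => Prod.ext h (hexc z hz h)
    have hnb : ¬ bigRow S y.1 := by
      rintro ⟨u, hu, v, hv, hu1, hv1, huv⟩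
      exact huv ((hsingc u hu hu1).trans (hsingc v hv hv1).symm)
    have hbigb : bigCol S x.2 := by
      rcases hpt _ hcbS with ⟨_, hb⟩ | ⟨hb, _⟩
      · exact hb
      · exact absurd hb hnb
    obtain ⟨w, hwS, hw2, hwne⟩ := bigCol_extra hbigb (y.1, x.2)
    have hw1 : w.1 ≠ y.1 := fun h => hwne (Prod.ext h hw2)
    by_cases hwz : w = x
    · -- w = x ∈ S; use x and a point of column y.2
      have hxS : x ∈ S := hwz ▸ hwS
      have hnsc : ¬ singleCol S x.2 := by
        intro hs
        have heq : x = (y.1, x.2) := hs x hxS (y.1, x.2) hcbS rfl rfl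
        have h5 : x.1 = ((y.1, x.2) : Fin n × Fin n).1 := congrArg Prod.fst heq
        exact h1 h5
      have hsra : singleRow S x.1 := by
        rcases hpt x hxS with ⟨h, _⟩ | ⟨_, h⟩
        · exact h
        · exact absurd h hnsc
      obtain ⟨v', hv'S, hv'2⟩ := hcol y.2
      by_cases hv'ad : v' = (x.1, y.2)
      · exfalso
        have heq := hsra v' hv'S x hxS (by rw [hv'ad]) rfl
        rw [hv'ad] at heq
        exact h2 (congrArg Prod.snd heq).symm
      · have hv'1 : v'.1 ≠ x.1 := fun h => hv'ad (Prod.ext h hv'2)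
        refine two_le_delS_pair hxS hv'S ?_ ?_ ?_
        · intro h; exact h2 (hv'2 ▸ congrArg Prod.snd h)
        · rw [dd_self, dd_one (fun h => h1 h.symm) (fun h => h2 h.symm)]; omega
        · have e1 : dd x v' = 1 := dd_one (fun h => hv'1 h.symm) (fun h => h2 (h.trans hv'2))
          have e2 : dd y v' ≠ 1 := dd_ne_one_snd hv'2.symm
          omega
    · refine two_le_delS_pair hz₁S hwS ?_ ?_ ?_
      · intro h
        -- z₁ = w : then w.1 = x.1 and w.2 = x.2 so w = x, contra hwz
        apply hwz
        exact Prod.ext ((congrArg Prod.fst h).symm.trans hz₁a) hw2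
      · rw [dd_one (fun h => h1 (hz₁a ▸ h).symm) (fun h => hz₁d h.symm)]
        exact dd_ne_one_fst hz₁a.symm
      · have e1 : dd y w = 1 := dd_one (fun h => hw1 h.symm) (by rw [hw2]; exact fun h => h2 h.symm)
        have e2 : dd x w ≠ 1 := dd_ne_one_snd hw2.symm
        omega

lemma suff (hrow : ∀ i, ∃ z ∈ S, z.1 = i)
    (hcol : ∀ j, ∃ z ∈ S, z.2 = j)
    (hpt : ∀ z ∈ S, (singleRow S z.1 ∧ bigCol S z.2) ∨ (bigRow S z.1 ∧ singleCol S z.2)) :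
    weakRes 2 S := by
  intro x y hxy
  by_cases h1 : x.1 = y.1
  · -- type A
    have h2 : x.2 ≠ y.2 := fun h => hxy (Prod.ext h1 h)
    obtain ⟨zb, hzbS, hzb⟩ := hcol x.2
    obtain ⟨zc, hzcS, hzc⟩ := hcol y.2
    by_cases hbx : zb = x
    · apply two_le_delS_single hzbS
      have hyx : dd y zb = 2 := dd_two_fst (hbx ▸ fun h => hxy h.symm) (hbx ▸ h1.symm)
      rw [hbx] at hyx ⊢
      rw [dd_self, hyx]
      norm_num
    · by_cases hcy : zc = y
      · apply two_le_delS_single hzcS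
        have hxy2 : dd x zc = 2 := dd_two_fst (hcy ▸ hxy) (hcy ▸ h1)
        rw [hcy] at hxy2 ⊢
        rw [dd_self, hxy2]
        norm_num
      · refine two_le_delS_pair hzbS hzcS ?_ ?_ ?_
        · intro h
          apply h2
          rw [← hzb, ← hzc, h]
        · have hb1 : zb.1 ≠ x.1 := fun h => hbx (Prod.ext h hzb)
          have e1 : dd y zb = 1 := dd_one (by rw [← h1]; exact fun h => hb1 h.symm)
            (by rw [hzb]; exact fun h => h2 h.symm)
          have e2 : dd x zb ≠ 1 := dd_ne_one_snd hzb.symm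
          omega
        · have hc1 : zc.1 ≠ y.1 := fun h => hcy (Prod.ext h hzc)
          have e1 : dd x zc = 1 := dd_one (by rw [h1]; exact fun h => hc1 h.symm)
            (by rw [hzc]; exact h2)
          have e2 : dd y zc ≠ 1 := dd_ne_one_snd hzc.symm
          omega
  · by_cases h2 : x.2 = y.2
    · -- type B
      obtain ⟨zb, hzbS, hzb⟩ := hrow x.1
      obtain ⟨zc, hzcS, hzc⟩ := hrow y.1
      by_cases hbx : zb = x
      · apply two_le_delS_single hzbS
        have hyx : dd y zb = 2 := dd_two_snd (hbx ▸ fun h => hxy h.symm) (hbx ▸ h2.symm)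
        rw [hbx] at hyx ⊢
        rw [dd_self, hyx]
        norm_num
      · by_cases hcy : zc = y
        · apply two_le_delS_single hzcS
          have hxy2 : dd x zc = 2 := dd_two_snd (hcy ▸ hxy) (hcy ▸ h2)
          rw [hcy] at hxy2 ⊢
          rw [dd_self, hxy2]
          norm_num
        · refine two_le_delS_pair hzbS hzcS ?_ ?_ ?_
          · intro h
            apply h1
            rw [← hzb, ← hzc, h]
          · have hb2 : zb.2 ≠ x.2 := fun h => hbx (Prod.ext hzb h)
            have e1 : dd y zb = 1 := dd_one (by rw [hzb]; exact fun h => h1 h.symm)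
              (by rw [← h2]; exact fun h => hb2 h.symm)
            have e2 : dd x zb ≠ 1 := dd_ne_one_fst hzb.symm
            omega
          · have hc2 : zc.2 ≠ y.2 := fun h => hcy (Prod.ext hzc h)
            have e1 : dd x zc = 1 := dd_one (by rw [hzc]; exact h1)
              (by rw [h2]; exact fun h => hc2 h.symm)
            have e2 : dd y zc ≠ 1 := dd_ne_one_fst hzc.symm
            omega
    · -- type C
      by_cases hA : ∃ z ∈ S, z.1 = x.1 ∧ z.2 ≠ y.2
      · exact auxC hrow hcol hpt x y h1 h2 hA
      · by_cases hB : ∃ z ∈ S, z.1 = y.1 ∧ z.2 ≠ x.2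
        · rw [delS_comm]
          exact auxC hrow hcol hpt y x (Ne.symm h1) (Ne.symm h2) hB
        · -- rows x.1 and y.1 are singletons {(x.1,y.2)}, {(y.1,x.2)}
          push_neg at hA hB
          obtain ⟨za, hzaS, hza1⟩ := hrow x.1
          have hzax : za = (x.1, y.2) := Prod.ext hza1 (hA za hzaS hza1)
          have hadS : ((x.1, y.2) : Fin n × Fin n) ∈ S := hzax ▸ hzaS
          obtain ⟨zc, hzcS, hzc1⟩ := hrow y.1
          have hzcx : zc = (y.1, x.2) := Prod.ext hzc1 (hB zc hzcS hzc1)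
          have hcbS : ((y.1, x.2) : Fin n × Fin n) ∈ S := hzcx ▸ hzcS
          have hnba : ¬ bigRow S x.1 := by
            rintro ⟨u, hu, v, hv, hu1, hv1, huv⟩
            exact huv ((show u = (x.1, y.2) from Prod.ext hu1 (hA u hu hu1)).trans
              (show v = (x.1, y.2) from Prod.ext hv1 (hA v hv hv1)).symm)
          have hnbc : ¬ bigRow S y.1 := by
            rintro ⟨u, hu, v, hv, hu1, hv1, huv⟩
            exact huv ((show u = (y.1, x.2) from Prod.ext hu1 (hB u hu hu1)).trans
              (show v = (y.1, x.2) from Prod.ext hv1 (hB v hv hv1)).symm)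
          have hbigd : bigCol S y.2 := by
            rcases hpt _ hadS with ⟨_, hb⟩ | ⟨hb, _⟩
            · exact hb
            · exact absurd hb hnba
          have hbigb : bigCol S x.2 := by
            rcases hpt _ hcbS with ⟨_, hb⟩ | ⟨hb, _⟩
            · exact hb
            · exact absurd hb hnbc
          obtain ⟨w₁, hw₁S, hw₁2, hw₁ne⟩ := bigCol_extra hbigb (y.1, x.2)
          obtain ⟨w₂, hw₂S, hw₂2, hw₂ne⟩ := bigCol_extra hbigd (x.1, y.2)
          have hw₁1 : w₁.1 ≠ y.1 := fun h => hw₁ne (Prod.ext h hw₁2)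
          have hw₂1 : w₂.1 ≠ x.1 := fun h => hw₂ne (Prod.ext h hw₂2)
          refine two_le_delS_pair hw₁S hw₂S ?_ ?_ ?_
          · intro h; exact h2 (hw₁2 ▸ hw₂2 ▸ congrArg Prod.snd h)
          · have e1 : dd y w₁ = 1 := dd_one (fun h => hw₁1 h.symm)
              (by rw [hw₁2]; exact fun h => h2 h.symm)
            have e2 : dd x w₁ ≠ 1 := dd_ne_one_snd hw₁2.symm
            omega
          · have e1 : dd x w₂ = 1 := dd_one (fun h => hw₂1 h.symm)
              (by rw [hw₂2]; exact h2)
            have e2 : dd y w₂ ≠ 1 := dd_ne_one_snd hw₂2.symm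
            omega
end suff

/-! ### The construction -/

def tt (n : ℕ) : ℕ := (n + 2) / 3
def pp (n : ℕ) : ℕ := (n - tt n) / 2
def qq (n : ℕ) : ℕ := (n - tt n) - pp n

lemma facts {n : ℕ} (hn : 4 ≤ n) :
    1 ≤ pp n ∧ pp n ≤ qq n ∧ pp n + qq n + tt n = n ∧ pp n ≤ tt n ∧ qq n ≤ tt n ∧ 2 ≤ tt n := by
  unfold qq pp tt
  omega

def conS (n : ℕ) (hn : 4 ≤ n) : Finset (Fin n × Fin n) :=
  ((Finset.Ico (qq n) n).image fun i =>
    ((⟨i % n, Nat.mod_lt _ (by omega)⟩ : Fin n),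
     (⟨((i - qq n) % pp n) % n, Nat.mod_lt _ (by omega)⟩ : Fin n))) ∪
  ((Finset.Ico (pp n) n).image fun j =>
    ((⟨((j - pp n) % qq n) % n, Nat.mod_lt _ (by omega)⟩ : Fin n),
     (⟨j % n, Nat.mod_lt _ (by omega)⟩ : Fin n)))

lemma mem_conS_iff {n : ℕ} (hn : 4 ≤ n) (z : Fin n × Fin n) :
    z ∈ conS n hn ↔
      (qq n ≤ (z.1 : ℕ) ∧ (z.2 : ℕ) = ((z.1 : ℕ) - qq n) % pp n) ∨
      (pp n ≤ (z.2 : ℕ) ∧ (z.1 : ℕ) = ((z.2 : ℕ) - pp n) % qq n) := by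
  obtain ⟨hp1, hpq, hsum, hpt', hqt, ht2⟩ := facts hn
  have hpn : pp n ≤ n := by omega
  have hqn : qq n ≤ n := by omega
  constructor
  · intro hz
    rcases Finset.mem_union.mp hz with h | h
    · left
      obtain ⟨i, hi, heq⟩ := Finset.mem_image.mp h
      rw [Finset.mem_Ico] at hi
      have h1 : (z.1 : ℕ) = i := by rw [← heq]; simp [Nat.mod_eq_of_lt hi.2]
      have h2 : (z.2 : ℕ) = (i - qq n) % pp n := by
        rw [← heq]
        simp [Nat.mod_eq_of_lt (lt_of_lt_of_le (Nat.mod_lt _ (by omega)) hpn)]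
      exact ⟨h1 ▸ hi.1, by rw [h1, h2]⟩
    · right
      obtain ⟨j, hj, heq⟩ := Finset.mem_image.mp h
      rw [Finset.mem_Ico] at hj
      have h1 : (z.2 : ℕ) = j := by rw [← heq]; simp [Nat.mod_eq_of_lt hj.2]
      have h2 : (z.1 : ℕ) = (j - pp n) % qq n := by
        rw [← heq]
        simp [Nat.mod_eq_of_lt (lt_of_lt_of_le (Nat.mod_lt _ (by omega)) hqn)]
      exact ⟨h1 ▸ hj.1, by rw [h1, h2]⟩
  · intro hz
    rcases hz with ⟨h1, h2⟩ | ⟨h1, h2⟩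
    · apply Finset.mem_union_left
      apply Finset.mem_image.mpr
      refine ⟨(z.1 : ℕ), Finset.mem_Ico.mpr ⟨h1, z.1.isLt⟩, ?_⟩
      apply Prod.ext <;> apply Fin.ext <;> simp
      · exact Nat.mod_eq_of_lt z.1.isLt
      · rw [Nat.mod_eq_of_lt (lt_of_lt_of_le (Nat.mod_lt _ (by omega)) hpn)]
        exact h2.symm
    · apply Finset.mem_union_right
      apply Finset.mem_image.mpr
      refine ⟨(z.2 : ℕ), Finset.mem_Ico.mpr ⟨h1, z.2.isLt⟩, ?_⟩
      apply Prod.ext <;> apply Fin.ext <;> simp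
      · rw [Nat.mod_eq_of_lt (lt_of_lt_of_le (Nat.mod_lt _ (by omega)) hqn)]
        exact h2.symm
      · exact Nat.mod_eq_of_lt z.2.isLt

lemma conS_card {n : ℕ} (hn : 4 ≤ n) : (conS n hn).card = n + tt n := by
  obtain ⟨hp1, hpq, hsum, hpt', hqt, ht2⟩ := facts hn
  unfold conS
  rw [Finset.card_union_of_disjoint]
  · have c1 : ((Finset.Ico (qq n) n).image fun i =>
        ((⟨i % n, Nat.mod_lt _ (by omega)⟩ : Fin n),
         (⟨((i - qq n) % pp n) % n, Nat.mod_lt _ (by omega)⟩ : Fin n))).card = n - qq n := by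
      rw [Finset.card_image_of_injOn, Nat.card_Ico]
      intro a ha b hb hab
      simp only [Finset.coe_Ico, Set.mem_Ico] at ha hb
      have h := congrArg (fun z => ((z.1 : Fin n) : ℕ)) hab
      simp only at h
      rw [Nat.mod_eq_of_lt ha.2, Nat.mod_eq_of_lt hb.2] at h
      exact h
    have c2 : ((Finset.Ico (pp n) n).image fun j =>
        ((⟨((j - pp n) % qq n) % n, Nat.mod_lt _ (by omega)⟩ : Fin n),
         (⟨j % n, Nat.mod_lt _ (by omega)⟩ : Fin n))).card = n - pp n := by
      rw [Finset.card_image_of_injOn, Nat.card_Ico]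
      intro a ha b hb hab
      simp only [Finset.coe_Ico, Set.mem_Ico] at ha hb
      have h := congrArg (fun z => ((z.2 : Fin n) : ℕ)) hab
      simp only at h
      rw [Nat.mod_eq_of_lt ha.2, Nat.mod_eq_of_lt hb.2] at h
      exact h
    rw [c1, c2]
    omega
  · rw [Finset.disjoint_left]
    intro z hz1 hz2
    obtain ⟨i, hi, heqi⟩ := Finset.mem_image.mp hz1
    obtain ⟨j, hj, heqj⟩ := Finset.mem_image.mp hz2
    rw [Finset.mem_Ico] at hi hj
    have h1 : (z.2 : ℕ) = ((i - qq n) % pp n) % n := by rw [← heqi]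
    have h2 : (z.2 : ℕ) = j % n := by rw [← heqj]
    have hb1 : (i - qq n) % pp n < pp n := Nat.mod_lt _ (by omega)
    rw [Nat.mod_eq_of_lt (by omega : (i - qq n) % pp n < n)] at h1
    rw [Nat.mod_eq_of_lt hj.2] at h2
    omega

lemma conS_hrow {n : ℕ} (hn : 4 ≤ n) : ∀ i : Fin n, ∃ z ∈ conS n hn, z.1 = i := by
  obtain ⟨hp1, hpq, hsum, hpt', hqt, ht2⟩ := facts hn
  intro i
  by_cases h : qq n ≤ (i : ℕ)
  · refine ⟨(i, ⟨((i : ℕ) - qq n) % pp n, by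
      have := Nat.mod_lt ((i : ℕ) - qq n) (show 0 < pp n by omega); omega⟩), ?_, rfl⟩
    rw [mem_conS_iff hn]
    exact Or.inl ⟨h, rfl⟩
  · refine ⟨(i, ⟨pp n + (i : ℕ), by omega⟩), ?_, rfl⟩
    rw [mem_conS_iff hn]
    right
    constructor
    · simp
    · show (i : ℕ) = (pp n + (i : ℕ) - pp n) % qq n
      rw [Nat.add_sub_cancel_left, Nat.mod_eq_of_lt (by omega)]

lemma conS_hcol {n : ℕ} (hn : 4 ≤ n) : ∀ j : Fin n, ∃ z ∈ conS n hn, z.2 = j := by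
  obtain ⟨hp1, hpq, hsum, hpt', hqt, ht2⟩ := facts hn
  intro j
  by_cases h : pp n ≤ (j : ℕ)
  · refine ⟨(⟨((j : ℕ) - pp n) % qq n, by
      have := Nat.mod_lt ((j : ℕ) - pp n) (show 0 < qq n by omega); omega⟩, j), ?_, rfl⟩
    rw [mem_conS_iff hn]
    exact Or.inr ⟨h, rfl⟩
  · refine ⟨(⟨qq n + (j : ℕ), by omega⟩, j), ?_, rfl⟩
    rw [mem_conS_iff hn]
    left
    constructor
    · simp
    · show (j : ℕ) = (qq n + (j : ℕ) - qq n) % pp n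
      rw [Nat.add_sub_cancel_left, Nat.mod_eq_of_lt (by omega)]

lemma conS_hpt {n : ℕ} (hn : 4 ≤ n) : ∀ z ∈ conS n hn,
    (singleRow (conS n hn) z.1 ∧ bigCol (conS n hn) z.2) ∨
    (bigRow (conS n hn) z.1 ∧ singleCol (conS n hn) z.2) := by
  obtain ⟨hp1, hpq, hsum, hpt', hqt, ht2⟩ := facts hn
  intro z hz
  rcases (mem_conS_iff hn z).mp hz with ⟨h1, h2⟩ | ⟨h1, h2⟩
  · left
    constructor
    · intro u hu w hw hu1 hw1
      have key : ∀ v ∈ conS n hn, v.1 = z.1 → (v.2 : ℕ) = ((z.1 : ℕ) - qq n) % pp n := by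
        intro v hv hv1
        rcases (mem_conS_iff hn v).mp hv with ⟨g1, g2⟩ | ⟨g1, g2⟩
        · rw [g2, hv1]
        · exfalso
          have : (v.1 : ℕ) < qq n := by
            rw [g2]; exact Nat.mod_lt _ (by omega)
          rw [hv1] at this
          omega
      have e1 : (u.2 : ℕ) = (w.2 : ℕ) := by rw [key u hu hu1, key w hw hw1]
      exact Prod.ext (hu1.trans hw1.symm) (Fin.ext e1)
    · -- two points in column z.2 : rows qq n + c and qq n + c + pp n
      set c := ((z.1 : ℕ) - qq n) % pp n with hc
      have hcp : c < pp n := Nat.mod_lt _ (by omega)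
      have hb1 : qq n + c < n := by omega
      have hb2 : qq n + c + pp n < n := by omega
      refine ⟨(⟨qq n + c, hb1⟩, z.2), ?_, (⟨qq n + c + pp n, hb2⟩, z.2), ?_, rfl, rfl, ?_⟩
      · rw [mem_conS_iff hn]
        left
        refine ⟨by simp, ?_⟩
        show (z.2 : ℕ) = (qq n + c - qq n) % pp n
        rw [Nat.add_sub_cancel_left, Nat.mod_eq_of_lt hcp, h2]
      · rw [mem_conS_iff hn]
        left
        refine ⟨by simp; omega, ?_⟩
        show (z.2 : ℕ) = (qq n + c + pp n - qq n) % pp n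
        have e : qq n + c + pp n - qq n = c + pp n := by omega
        rw [e, Nat.add_mod_right, Nat.mod_eq_of_lt hcp, h2]
      · intro h
        have := congrArg (fun v => ((v.1 : Fin n) : ℕ)) h
        simp only at this
        omega
  · right
    constructor
    · -- two points in row z.1 : cols pp n + r and pp n + r + qq n
      set r := ((z.2 : ℕ) - pp n) % qq n with hr
      have hrq : r < qq n := Nat.mod_lt _ (by omega)
      have hb1 : pp n + r < n := by omega
      have hb2 : pp n + r + qq n < n := by omega
      refine ⟨(z.1, ⟨pp n + r, hb1⟩), ?_, (z.1, ⟨pp n + r + qq n, hb2⟩), ?_, rfl, rfl, ?_⟩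
      · rw [mem_conS_iff hn]
        right
        refine ⟨by simp, ?_⟩
        show (z.1 : ℕ) = (pp n + r - pp n) % qq n
        rw [Nat.add_sub_cancel_left, Nat.mod_eq_of_lt hrq, h2]
      · rw [mem_conS_iff hn]
        right
        refine ⟨by simp; omega, ?_⟩
        show (z.1 : ℕ) = (pp n + r + qq n - pp n) % qq n
        have e : pp n + r + qq n - pp n = r + qq n := by omega
        rw [e, Nat.add_mod_right, Nat.mod_eq_of_lt hrq, h2]
      · intro h
        have := congrArg (fun v => ((v.2 : Fin n) : ℕ)) h
        simp only at this
        omega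
    · intro u hu w hw hu2 hw2
      have key : ∀ v ∈ conS n hn, v.2 = z.2 → (v.1 : ℕ) = ((z.2 : ℕ) - pp n) % qq n := by
        intro v hv hv2
        rcases (mem_conS_iff hn v).mp hv with ⟨g1, g2⟩ | ⟨g1, g2⟩
        · exfalso
          have : (v.2 : ℕ) < pp n := by
            rw [g2]; exact Nat.mod_lt _ (by omega)
          rw [hv2] at this
          omega
        · rw [g2, hv2]
      have e1 : (u.1 : ℕ) = (w.1 : ℕ) := by rw [key u hu hu2, key w hw hw2]
      exact Prod.ext (Fin.ext e1) (hu2.trans hw2.symm)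

lemma upper (n : ℕ) (hn : 4 ≤ n) :
    ∃ S : Finset (Fin n × Fin n), weakRes 2 S ∧ S.card = n + (n + 2) / 3 := by
  exact ⟨conS n hn, suff (conS_hrow hn) (conS_hcol hn) (conS_hpt hn), conS_card hn⟩

/-! ### Lower bound -/

section lower
variable {n : ℕ} {S : Finset (Fin n × Fin n)}

lemma dd_one_or_two {x z : Fin n × Fin n} (h : x ≠ z) : dd x z = 1 ∨ dd x z = 2 := by
  rw [dd, if_neg h]
  split_ifs <;> simp

lemma colEmpty (hn : 4 ≤ n) (hw : weakRes 2 S) (b : Fin n) (hb : ∀ z ∈ S, z.2 ≠ b) :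
    ∀ c, c ≠ b → 2 ≤ (S.filter (fun z => z.2 = c)).card := by
  intro c hc
  by_contra hcard
  push_neg at hcard
  interval_cases hfc : (S.filter (fun z => z.2 = c)).card
  · -- column c empty as well
    have hcempty : ∀ z ∈ S, z.2 ≠ c := by
      intro z hz hzc
      have : z ∈ S.filter (fun z => z.2 = c) := Finset.mem_filter.mpr ⟨hz, hzc⟩
      rw [Finset.card_eq_zero.mp hfc] at this
      exact absurd this (Finset.notMem_empty z)
    set x : Fin n × Fin n := (⟨0, by omega⟩, b) with hx
    set y : Fin n × Fin n := (⟨0, by omega⟩, c) with hy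
    have hxy : x ≠ y := fun h => hc (congrArg Prod.snd h).symm
    have h0 : delS S x y = 0 := by
      apply Finset.sum_eq_zero
      intro z hz
      have heq : dd x z = dd y z := by
        have hzb : x.2 ≠ z.2 := fun h => hb z hz h.symm
        have hzc : y.2 ≠ z.2 := fun h => hcempty z hz h.symm
        by_cases h1 : x.1 = z.1
        · rw [dd_two_fst (x := x) (fun h => hzb (congrArg Prod.snd h)) h1,
             dd_two_fst (x := y) (fun h => hzc (congrArg Prod.snd h)) h1]
        · rw [dd_one (x := x) h1 hzb, dd_one (x := y) h1 hzc]
      rw [heq]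
      simp
    have := hw x y hxy
    omega
  · -- column c has exactly one point z₀
    obtain ⟨z₀, hz₀⟩ := Finset.card_eq_one.mp hfc
    have hz₀S : z₀ ∈ S ∧ z₀.2 = c := by
      have : z₀ ∈ S.filter (fun z => z.2 = c) := hz₀ ▸ Finset.mem_singleton_self z₀
      exact Finset.mem_filter.mp this
    set a : Fin n := if (z₀.1 : ℕ) = 0 then ⟨1, by omega⟩ else ⟨0, by omega⟩ with ha
    have haz : a ≠ z₀.1 := by
      rw [ha]
      split_ifs with h
      · intro heq; have := congrArg Fin.val heq; simp [h] at this
      · intro heq; have := congrArg Fin.val heq; simp at this; exact h this.symm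
    set x : Fin n × Fin n := (a, b) with hx
    set y : Fin n × Fin n := (a, c) with hy
    have hxy : x ≠ y := fun h => hc (congrArg Prod.snd h).symm
    have hbnd : delS S x y ≤ 1 := by
      have hpt : ∀ z ∈ S, ((dd x z : ℤ) - (dd y z : ℤ)).natAbs ≤ if z = z₀ then 1 else 0 := by
        intro z hz
        by_cases hzz : z = z₀
        · have e1 : dd x z = 1 := dd_one (x := x)
            (by intro h; rw [hzz] at h; exact haz h) (fun h => hb z hz h.symm)
          have e2 : dd y z = 2 := dd_two_snd (x := y)
            (by intro h; rw [hzz] at h; exact haz (congrArg Prod.fst h))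
            (by rw [hzz]; exact hz₀S.2.symm)
          rw [e1, e2]
          simp [hzz]
        · have hzc2 : z.2 ≠ c := by
            intro h
            exact hzz (Finset.mem_singleton.mp (hz₀ ▸ Finset.mem_filter.mpr ⟨hz, h⟩))
          have heq : dd x z = dd y z := by
            have hzb : x.2 ≠ z.2 := fun h => hb z hz h.symm
            have hzc : y.2 ≠ z.2 := fun h => hzc2 h.symm
            by_cases h1 : x.1 = z.1
            · rw [dd_two_fst (x := x) (fun h => hzb (congrArg Prod.snd h)) h1,
                 dd_two_fst (x := y) (fun h => hzc (congrArg Prod.snd h)) h1]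
            · rw [dd_one (x := x) h1 hzb, dd_one (x := y) h1 hzc]
          rw [heq]
          simp [hzz]
      calc delS S x y ≤ ∑ z ∈ S, if z = z₀ then 1 else 0 := Finset.sum_le_sum hpt
        _ ≤ 1 := by rw [Finset.sum_ite_eq' S z₀ (fun _ => 1)]; split_ifs <;> omega
    have := hw x y hxy
    omega

lemma rowEmpty (hn : 4 ≤ n) (hw : weakRes 2 S) (b : Fin n) (hb : ∀ z ∈ S, z.1 ≠ b) :
    ∀ c, c ≠ b → 2 ≤ (S.filter (fun z => z.1 = c)).card := by
  intro c hc
  by_contra hcard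
  push_neg at hcard
  interval_cases hfc : (S.filter (fun z => z.1 = c)).card
  · have hcempty : ∀ z ∈ S, z.1 ≠ c := by
      intro z hz hzc
      have : z ∈ S.filter (fun z => z.1 = c) := Finset.mem_filter.mpr ⟨hz, hzc⟩
      rw [Finset.card_eq_zero.mp hfc] at this
      exact absurd this (Finset.notMem_empty z)
    set x : Fin n × Fin n := (b, ⟨0, by omega⟩) with hx
    set y : Fin n × Fin n := (c, ⟨0, by omega⟩) with hy
    have hxy : x ≠ y := fun h => hc (congrArg Prod.fst h).symm
    have h0 : delS S x y = 0 := by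
      apply Finset.sum_eq_zero
      intro z hz
      have heq : dd x z = dd y z := by
        have hzb : x.1 ≠ z.1 := fun h => hb z hz h.symm
        have hzc : y.1 ≠ z.1 := fun h => hcempty z hz h.symm
        by_cases h1 : x.2 = z.2
        · rw [dd_two_snd (x := x) (fun h => hzb (congrArg Prod.fst h)) h1,
             dd_two_snd (x := y) (fun h => hzc (congrArg Prod.fst h)) h1]
        · rw [dd_one (x := x) hzb h1, dd_one (x := y) hzc h1]
      rw [heq]
      simp
    have := hw x y hxy
    omega
  · obtain ⟨z₀, hz₀⟩ := Finset.card_eq_one.mp hfc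
    have hz₀S : z₀ ∈ S ∧ z₀.1 = c := by
      have : z₀ ∈ S.filter (fun z => z.1 = c) := hz₀ ▸ Finset.mem_singleton_self z₀
      exact Finset.mem_filter.mp this
    set a : Fin n := if (z₀.2 : ℕ) = 0 then ⟨1, by omega⟩ else ⟨0, by omega⟩ with ha
    have haz : a ≠ z₀.2 := by
      rw [ha]
      split_ifs with h
      · intro heq; have := congrArg Fin.val heq; simp [h] at this
      · intro heq; have := congrArg Fin.val heq; simp at this; exact h this.symm
    set x : Fin n × Fin n := (b, a) with hx
    set y : Fin n × Fin n := (c, a) with hy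
    have hxy : x ≠ y := fun h => hc (congrArg Prod.fst h).symm
    have hbnd : delS S x y ≤ 1 := by
      have hpt : ∀ z ∈ S, ((dd x z : ℤ) - (dd y z : ℤ)).natAbs ≤ if z = z₀ then 1 else 0 := by
        intro z hz
        by_cases hzz : z = z₀
        · have e1 : dd x z = 1 := dd_one (x := x)
            (fun h => hb z hz h.symm) (by intro h; rw [hzz] at h; exact haz h)
          have e2 : dd y z = 2 := dd_two_fst (x := y)
            (by intro h; rw [hzz] at h; exact haz (congrArg Prod.snd h))
            (by rw [hzz]; exact hz₀S.2.symm)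
          rw [e1, e2]
          simp [hzz]
        · have hzc2 : z.1 ≠ c := by
            intro h
            exact hzz (Finset.mem_singleton.mp (hz₀ ▸ Finset.mem_filter.mpr ⟨hz, h⟩))
          have heq : dd x z = dd y z := by
            have hzb : x.1 ≠ z.1 := fun h => hb z hz h.symm
            have hzc : y.1 ≠ z.1 := fun h => hzc2 h.symm
            by_cases h1 : x.2 = z.2
            · rw [dd_two_snd (x := x) (fun h => hzb (congrArg Prod.fst h)) h1,
                 dd_two_snd (x := y) (fun h => hzc (congrArg Prod.fst h)) h1]
            · rw [dd_one (x := x) hzb h1, dd_one (x := y) hzc h1]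
          rw [heq]
          simp [hzz]
      calc delS S x y ≤ ∑ z ∈ S, if z = z₀ then 1 else 0 := Finset.sum_le_sum hpt
        _ ≤ 1 := by rw [Finset.sum_ite_eq' S z₀ (fun _ => 1)]; split_ifs <;> omega
    have := hw x y hxy
    omega
end lower

section lower2
variable {n : ℕ} {S : Finset (Fin n × Fin n)}

lemma Nstar (hw : weakRes 2 S) (a c p q : Fin n) (hac : a ≠ c) (hpq : p ≠ q)
    (hapS : (a, p) ∈ S) (ha : ∀ z ∈ S, z.1 = a → z = (a, p))
    (hcqS : (c, q) ∈ S) (hc : ∀ z ∈ S, z.1 = c → z = (c, q)) :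
    4 ≤ (S.filter fun z => z.2 = p).card + (S.filter fun z => z.2 = q).card := by
  set x : Fin n × Fin n := (a, q) with hxdef
  set y : Fin n × Fin n := (c, p) with hydef
  have hxy : x ≠ y := fun h => hac (congrArg Prod.fst h)
  have h2 : 2 ≤ delS S x y := hw x y hxy
  have hpt : ∀ z ∈ S, ((dd x z : ℤ) - (dd y z : ℤ)).natAbs ≤
      (if z.2 = p ∧ z ≠ (a, p) then 1 else 0) + (if z.2 = q ∧ z ≠ (c, q) then 1 else 0) := by
    intro z hz
    by_cases hz1 : z.1 = a
    · have hzap : z = (a, p) := ha z hz hz1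
      have e1 : dd x z = 2 := dd_two_fst (x := x)
        (by intro h; rw [hzap] at h; exact hpq (congrArg Prod.snd h).symm)
        (by rw [hzap])
      have e2 : dd y z = 2 := dd_two_snd (x := y)
        (by intro h; rw [hzap] at h; exact hac (congrArg Prod.fst h).symm)
        (by rw [hzap])
      rw [e1, e2]
      simp
    · by_cases hz2 : z.1 = c
      · have hzcq : z = (c, q) := hc z hz hz2
        have e1 : dd x z = 2 := dd_two_snd (x := x)
          (by intro h; rw [hzcq] at h; exact hac (congrArg Prod.fst h))
          (by rw [hzcq])
        have e2 : dd y z = 2 := dd_two_fst (x := y)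
          (by intro h; rw [hzcq] at h; exact hpq (congrArg Prod.snd h))
          (by rw [hzcq])
        rw [e1, e2]
        simp
      · have hzx : x ≠ z := fun h => hz1 (congrArg Prod.fst h).symm
        have hzy : y ≠ z := fun h => hz2 (congrArg Prod.fst h).symm
        have hb1 : ((dd x z : ℤ) - (dd y z : ℤ)).natAbs ≤ 1 := by
          rcases dd_one_or_two hzx with e | e <;> rcases dd_one_or_two hzy with f | f <;>
            rw [e, f] <;> simp
        by_cases hzp : z.2 = p
        · have he : (if z.2 = p ∧ z ≠ (a, p) then (1:ℕ) else 0) = 1 :=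
            if_pos ⟨hzp, fun h => hz1 (by rw [h])⟩
          omega
        · by_cases hzq : z.2 = q
          · have he : (if z.2 = q ∧ z ≠ (c, q) then (1:ℕ) else 0) = 1 :=
              if_pos ⟨hzq, fun h => hz2 (by rw [h])⟩
            omega
          · have e1 : dd x z = 1 := dd_one (x := x) (fun h => hz1 h.symm) (fun h => hzq h.symm)
            have e2 : dd y z = 1 := dd_one (x := y) (fun h => hz2 h.symm) (fun h => hzp h.symm)
            rw [e1, e2]
            simp
  have hsum : delS S x y ≤ (S.filter fun z => z.2 = p ∧ z ≠ (a, p)).card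
      + (S.filter fun z => z.2 = q ∧ z ≠ (c, q)).card := by
    calc delS S x y
        ≤ ∑ z ∈ S, ((if z.2 = p ∧ z ≠ (a, p) then 1 else 0)
            + (if z.2 = q ∧ z ≠ (c, q) then 1 else 0)) := Finset.sum_le_sum hpt
      _ = (∑ z ∈ S, (if z.2 = p ∧ z ≠ (a, p) then 1 else 0))
            + ∑ z ∈ S, (if z.2 = q ∧ z ≠ (c, q) then 1 else 0) := Finset.sum_add_distrib
      _ = _ := by rw [Finset.sum_boole, Finset.sum_boole]; simp
  have hc1 : (S.filter fun z => z.2 = p ∧ z ≠ (a, p)).card + 1 = (S.filter fun z => z.2 = p).card := by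
    have heq : S.filter (fun z => z.2 = p ∧ z ≠ (a, p)) = (S.filter fun z => z.2 = p).erase (a, p) := by
      ext z
      simp only [Finset.mem_erase, Finset.mem_filter]
      tauto
    have hmem : (a, p) ∈ S.filter fun z => z.2 = p := Finset.mem_filter.mpr ⟨hapS, rfl⟩
    rw [heq, Finset.card_erase_of_mem hmem]
    have hpos : 0 < (S.filter fun z => z.2 = p).card := Finset.card_pos.mpr ⟨(a, p), hmem⟩
    omega
  have hc2 : (S.filter fun z => z.2 = q ∧ z ≠ (c, q)).card + 1 = (S.filter fun z => z.2 = q).card := by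
    have heq : S.filter (fun z => z.2 = q ∧ z ≠ (c, q)) = (S.filter fun z => z.2 = q).erase (c, q) := by
      ext z
      simp only [Finset.mem_erase, Finset.mem_filter]
      tauto
    have hmem : (c, q) ∈ S.filter fun z => z.2 = q := Finset.mem_filter.mpr ⟨hcqS, rfl⟩
    rw [heq, Finset.card_erase_of_mem hmem]
    have hpos : 0 < (S.filter fun z => z.2 = q).card := Finset.card_pos.mpr ⟨(c, q), hmem⟩
    omega
  omega

end lower2

lemma lowerBound {n : ℕ} (hn : 4 ≤ n) (S : Finset (Fin n × Fin n)) (hw : weakRes 2 S) :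
    n + (n + 2) / 3 ≤ S.card := by
  by_cases hec : ∃ b : Fin n, ∀ z ∈ S, z.2 ≠ b
  · -- empty column : |S| ≥ 2(n-1)
    obtain ⟨b, hb⟩ := hec
    have h2 : ∀ c ∈ Finset.univ.erase b, 2 ≤ (S.filter fun z => z.2 = c).card :=
      fun c hc => colEmpty hn hw b hb c (Finset.mem_erase.mp hc).1
    have hfib : S.card = ∑ j : Fin n, (S.filter fun z => z.2 = j).card :=
      Finset.card_eq_sum_card_fiberwise (fun z _ => Finset.mem_univ z.2)
    have hsub : ∑ j ∈ Finset.univ.erase b, (S.filter fun z => z.2 = j).card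
        ≤ ∑ j : Fin n, (S.filter fun z => z.2 = j).card :=
      Finset.sum_le_sum_of_subset (Finset.erase_subset _ _)
    have hge : 2 * (n - 1) ≤ ∑ j ∈ Finset.univ.erase b, (S.filter fun z => z.2 = j).card := by
      have := Finset.sum_le_sum h2
      rw [Finset.sum_const, Finset.card_erase_of_mem (Finset.mem_univ b), Finset.card_univ,
        Fintype.card_fin, smul_eq_mul] at this
      omega
    omega
  by_cases her : ∃ b : Fin n, ∀ z ∈ S, z.1 ≠ b
  · obtain ⟨b, hb⟩ := her
    have h2 : ∀ c ∈ Finset.univ.erase b, 2 ≤ (S.filter fun z => z.1 = c).card :=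
      fun c hc => rowEmpty hn hw b hb c (Finset.mem_erase.mp hc).1
    have hfib : S.card = ∑ i : Fin n, (S.filter fun z => z.1 = i).card :=
      Finset.card_eq_sum_card_fiberwise (fun z _ => Finset.mem_univ z.1)
    have hsub : ∑ i ∈ Finset.univ.erase b, (S.filter fun z => z.1 = i).card
        ≤ ∑ i : Fin n, (S.filter fun z => z.1 = i).card :=
      Finset.sum_le_sum_of_subset (Finset.erase_subset _ _)
    have hge : 2 * (n - 1) ≤ ∑ i ∈ Finset.univ.erase b, (S.filter fun z => z.1 = i).card := by
      have := Finset.sum_le_sum h2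
      rw [Finset.sum_const, Finset.card_erase_of_mem (Finset.mem_univ b), Finset.card_univ,
        Fintype.card_fin, smul_eq_mul] at this
      omega
    omega
  -- every row and every column is nonempty
  push_neg at hec her
  have hcol : ∀ b : Fin n, ∃ z ∈ S, z.2 = b := hec
  have hrow : ∀ b : Fin n, ∃ z ∈ S, z.1 = b := her
  set Cc : Fin n → ℕ := fun j => (S.filter fun z => z.2 = j).card with hCcdef
  set Rr : Fin n → ℕ := fun i => (S.filter fun z => z.1 = i).card with hRrdef
  have hm2 : S.card = ∑ j : Fin n, Cc j :=
    Finset.card_eq_sum_card_fiberwise (fun z _ => Finset.mem_univ z.2)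
  have hm1 : S.card = ∑ i : Fin n, Rr i :=
    Finset.card_eq_sum_card_fiberwise (fun z _ => Finset.mem_univ z.1)
  have hCc1 : ∀ j, 1 ≤ Cc j := by
    intro j
    obtain ⟨z, hz, hz2⟩ := hcol j
    exact Finset.card_pos.mpr ⟨z, Finset.mem_filter.mpr ⟨hz, hz2⟩⟩
  have hRr1 : ∀ i, 1 ≤ Rr i := by
    intro i
    obtain ⟨z, hz, hz1⟩ := hrow i
    exact Finset.card_pos.mpr ⟨z, Finset.mem_filter.mpr ⟨hz, hz1⟩⟩
  have hrow' : ∀ i : Fin n, ∃ z : Fin n × Fin n, z ∈ S ∧ z.1 = i := by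
    intro i; obtain ⟨z, hz, h1⟩ := hrow i; exact ⟨z, hz, h1⟩
  set w : Fin n → Fin n × Fin n := fun i => (hrow' i).choose with hwdef
  have hwS : ∀ i, w i ∈ S := fun i => (hrow' i).choose_spec.1
  have hw1 : ∀ i, (w i).1 = i := fun i => (hrow' i).choose_spec.2
  set T : Finset (Fin n) := Finset.univ.filter (fun i => Rr i = 1) with hTdef
  have hsingle : ∀ i, Rr i = 1 → ∀ z ∈ S, z.1 = i → z = w i := by
    intro i hRi z hz hz1
    have hcard : (S.filter fun z => z.1 = i).card ≤ 1 := le_of_eq hRi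
    exact Finset.card_le_one.mp hcard z
      (Finset.mem_filter.mpr ⟨hz, hz1⟩) (w i) (Finset.mem_filter.mpr ⟨hwS i, hw1 i⟩)
  have hTcard : 2 * n ≤ S.card + T.card := by
    have hpt : ∀ i ∈ Finset.univ, 2 ≤ Rr i + (if i ∈ T then 1 else 0) := by
      intro i _
      by_cases hiT : i ∈ T
      · rw [if_pos hiT]
        have := hRr1 i
        omega
      · rw [if_neg hiT]
        have : Rr i ≠ 1 := fun h => hiT (Finset.mem_filter.mpr ⟨Finset.mem_univ i, h⟩)
        have := hRr1 i
        omega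
    have hsum := Finset.sum_le_sum hpt
    rw [Finset.sum_add_distrib, Finset.sum_const, Finset.card_univ, Fintype.card_fin,
      smul_eq_mul] at hsum
    have hite : (∑ i : Fin n, if i ∈ T then (1:ℕ) else 0) = T.card := by
      rw [Finset.sum_ite_mem, Finset.univ_inter, Finset.sum_const, smul_eq_mul, mul_one]
    rw [hite] at hsum
    omega
  set g : Fin n → ℕ := fun j => (T.filter fun a => (w a).2 = j).card with hgdef
  have hTg : T.card = ∑ j : Fin n, g j :=
    Finset.card_eq_sum_card_fiberwise (fun a _ => Finset.mem_univ (w a).2)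
  have hCg : ∀ j, g j ≤ Cc j := by
    intro j
    apply Finset.card_le_card_of_injOn (fun a => w a)
    · intro a ha
      obtain ⟨haT, haj⟩ := Finset.mem_filter.mp ha
      exact Finset.mem_filter.mpr ⟨hwS a, haj⟩
    · intro a ha b hb hab
      have := congrArg Prod.fst hab
      rw [hw1 a, hw1 b] at this
      exact this
  have hfiber : ∀ j, 1 ≤ g j → ∃ a ∈ T, (w a).2 = j := by
    intro j hj
    obtain ⟨a, ha⟩ := Finset.card_pos.mp hj
    obtain ⟨haT, haj⟩ := Finset.mem_filter.mp ha
    exact ⟨a, haT, haj⟩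
  have hRT : ∀ a ∈ T, Rr a = 1 := fun a ha => (Finset.mem_filter.mp ha).2
  by_cases hl : ∃ a ∈ T, Cc ((w a).2) = 1
  · -- lonely point case
    obtain ⟨a₀, ha₀T, ha₀C⟩ := hl
    by_cases hT1 : T.card ≤ 1
    · omega
    · obtain ⟨c₀, hc₀T, hc₀ne⟩ := Finset.exists_mem_ne (show 1 < T.card by omega) a₀
      have key : ∀ c ∈ T, c ≠ a₀ → (w c).2 ≠ (w a₀).2 ∧ 3 ≤ Cc ((w c).2) := by
        intro c hcT hne
        have hcq : (w c).2 ≠ (w a₀).2 := by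
          intro heq
          have h2lt : 1 < Cc ((w a₀).2) := by
            apply Finset.one_lt_card.mpr
            refine ⟨w c, Finset.mem_filter.mpr ⟨hwS c, heq⟩,
                    w a₀, Finset.mem_filter.mpr ⟨hwS a₀, rfl⟩, ?_⟩
            intro h
            have := congrArg Prod.fst h
            rw [hw1 c, hw1 a₀] at this
            exact hne this
          omega
        have hwa₀ : ((a₀ : Fin n), (w a₀).2) = w a₀ := Prod.ext (hw1 a₀).symm rfl
        have hwc : ((c : Fin n), (w c).2) = w c := Prod.ext (hw1 c).symm rfl
        have hstar := Nstar hw a₀ c (w a₀).2 (w c).2 (fun h => hne h.symm) (Ne.symm hcq)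
          (hwa₀ ▸ hwS a₀) (fun z hz hz1 => by rw [hwa₀]; exact hsingle a₀ (hRT a₀ ha₀T) z hz hz1)
          (hwc ▸ hwS c) (fun z hz hz1 => by rw [hwc]; exact hsingle c (hRT c hcT) z hz hz1)
        constructor
        · exact hcq
        · have e1 : (S.filter fun z => z.2 = (w a₀).2).card = Cc ((w a₀).2) := rfl
          have e2 : (S.filter fun z => z.2 = (w c).2).card = Cc ((w c).2) := rfl
          omega
      have hj₁ : (w c₀).2 ≠ (w a₀).2 := (key c₀ hc₀T hc₀ne).1
      have perj : ∀ j : Fin n, g j + 2 + (if j = (w c₀).2 then 1 else 0)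
          ≤ 2 * Cc j + (if j = (w a₀).2 then 1 else 0) := by
        intro j
        by_cases hjj : j = (w a₀).2
        · -- g j = 1 here (only a₀)
          subst hjj
          rw [if_neg (fun h => hj₁ h.symm), if_pos rfl]
          have hg1 : g ((w a₀).2) ≤ 1 := by
            apply Finset.card_le_one.mpr
            intro u hu v hv
            obtain ⟨huT, huj⟩ := Finset.mem_filter.mp hu
            obtain ⟨hvT, hvj⟩ := Finset.mem_filter.mp hv
            have hu0 : u = a₀ := by
              by_contra hne
              exact (key u huT hne).1 huj
            have hv0 : v = a₀ := by
              by_contra hne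
              exact (key v hvT hne).1 hvj
            rw [hu0, hv0]
          have := hCc1 ((w a₀).2)
          omega
        · rw [if_neg hjj]
          by_cases hjc : j = (w c₀).2
          · rw [if_pos hjc]
            have h3 : 3 ≤ Cc j := by rw [hjc]; exact (key c₀ hc₀T hc₀ne).2
            have := hCg j
            omega
          · rw [if_neg hjc]
            by_cases hg0 : g j = 0
            · have := hCc1 j
              omega
            · obtain ⟨a, haT, haj⟩ := hfiber j (by omega)
              have hane : a ≠ a₀ := by
                intro h
                rw [h] at haj
                exact hjj haj.symm
              have h3 : 3 ≤ Cc j := by rw [← haj]; exact (key a haT hane).2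
              have := hCg j
              omega
      have hsum := Finset.sum_le_sum (fun j (_ : j ∈ Finset.univ) => perj j)
      rw [Finset.sum_add_distrib, Finset.sum_add_distrib, Finset.sum_add_distrib] at hsum
      rw [Finset.sum_const, Finset.card_univ, Fintype.card_fin, smul_eq_mul] at hsum
      rw [Finset.sum_ite_eq' Finset.univ ((w c₀).2) (fun _ => 1),
        Finset.sum_ite_eq' Finset.univ ((w a₀).2) (fun _ => 1)] at hsum
      rw [if_pos (Finset.mem_univ _), if_pos (Finset.mem_univ _)] at hsum
      rw [← Finset.mul_sum] at hsum
      omega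
  · -- no lonely point
    push_neg at hl
    have perj : ∀ j : Fin n, g j + 2 ≤ 2 * Cc j := by
      intro j
      by_cases hg0 : g j = 0
      · have := hCc1 j
        omega
      · obtain ⟨a, haT, haj⟩ := hfiber j (by omega)
        have h2C : 2 ≤ Cc j := by
          have h1 : Cc ((w a).2) ≠ 1 := hl a haT
          have h2 : 1 ≤ Cc ((w a).2) := hCc1 _
          rw [haj] at h1 h2
          omega
        have := hCg j
        omega
    have hsum := Finset.sum_le_sum (fun j (_ : j ∈ Finset.univ) => perj j)
    rw [Finset.sum_add_distrib, Finset.sum_const, Finset.card_univ, Fintype.card_fin,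
      smul_eq_mul, ← Finset.mul_sum] at hsum
    omega

theorem stmt_6 (n : ℕ) (hn : 4 ≤ n) : wdim n 2 = n + (n + 2) / 3 := by
  obtain ⟨S, hS, hcard⟩ := upper n hn
  apply le_antisymm
  · exact Nat.sInf_le ⟨S, hS, hcard⟩
  · have hne : {m | ∃ S : Finset (Fin n × Fin n), weakRes 2 S ∧ S.card = m}.Nonempty :=
      ⟨n + (n + 2) / 3, ⟨S, hS, hcard⟩⟩
    apply le_csInf hne
    rintro m ⟨S', hS', rfl⟩
    exact lowerBound hn S' hS'
end

section
/- For every integer n ≥ 4, the weak 3-metric dimension of K_n × K_n equals 2n. -/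
open Finset

/-! ### Auxiliary counting machinery -/

section Aux

variable {n : ℕ}

/-- Number of elements of `S` in row `i`. -/
def rrS (S : Finset (Fin n × Fin n)) (i : Fin n) : ℕ := (S.filter (fun z => z.1 = i)).card
/-- Number of elements of `S` in column `j`. -/
def ccS (S : Finset (Fin n × Fin n)) (j : Fin n) : ℕ := (S.filter (fun z => z.2 = j)).card
/-- Indicator that `p ∈ S`. -/
def ssv (S : Finset (Fin n × Fin n)) (p : Fin n × Fin n) : ℕ := if p ∈ S then 1 else 0

lemma ssv_le_one (S : Finset (Fin n × Fin n)) (p) : ssv S p ≤ 1 := by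
  rw [ssv]; split_ifs <;> omega
lemma ssv_eq_one (S : Finset (Fin n × Fin n)) {p} (h : p ∈ S) : ssv S p = 1 := by
  rw [ssv, if_pos h]
lemma ssv_eq_zero (S : Finset (Fin n × Fin n)) {p} (h : p ∉ S) : ssv S p = 0 := by
  rw [ssv, if_neg h]
lemma mem_of_ssv_ne (S : Finset (Fin n × Fin n)) {p} (h : ssv S p ≠ 0) : p ∈ S := by
  by_contra hp; exact h (ssv_eq_zero S hp)

lemma sum_ind_fst (S : Finset (Fin n × Fin n)) (a : Fin n) :
    (∑ z ∈ S, (if z.1 = a then (1:ℤ) else 0)) = rrS S a := by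
  rw [Finset.sum_boole, rrS]
lemma sum_ind_snd (S : Finset (Fin n × Fin n)) (b : Fin n) :
    (∑ z ∈ S, (if z.2 = b then (1:ℤ) else 0)) = ccS S b := by
  rw [Finset.sum_boole, ccS]
lemma sum_ind_eq (S : Finset (Fin n × Fin n)) (p : Fin n × Fin n) :
    (∑ z ∈ S, (if z = p then (1:ℤ) else 0)) = ssv S p := by
  rw [Finset.sum_boole, ssv]
  congr 1
  rw [Finset.filter_eq']
  split_ifs <;> simp

lemma sum_rrS (S : Finset (Fin n × Fin n)) : ∑ i : Fin n, rrS S i = S.card := by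
  rw [Finset.card_eq_sum_card_fiberwise (f := Prod.fst) (t := univ) (fun x _ => mem_univ _)]
  rfl

lemma filter_pair_card (S : Finset (Fin n × Fin n)) (p : Fin n × Fin n) :
    (S.filter (fun z => z = p)).card = ssv S p := by
  rw [Finset.filter_eq', ssv]; split_ifs <;> simp

lemma ccS_eq_sum (S : Finset (Fin n × Fin n)) (b : Fin n) :
    ccS S b = ∑ a : Fin n, ssv S (a, b) := by
  rw [ccS, Finset.card_eq_sum_card_fiberwise (f := Prod.fst) (t := univ) (fun x _ => mem_univ _)]
  refine Finset.sum_congr rfl (fun a _ => ?_)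
  rw [Finset.filter_filter, ← filter_pair_card S (a,b)]
  congr 1
  ext z
  simp [Prod.ext_iff, and_comm]

lemma rrS_eq_sum (S : Finset (Fin n × Fin n)) (a : Fin n) :
    rrS S a = ∑ b : Fin n, ssv S (a, b) := by
  rw [rrS, Finset.card_eq_sum_card_fiberwise (f := Prod.snd) (t := univ) (fun x _ => mem_univ _)]
  refine Finset.sum_congr rfl (fun b _ => ?_)
  rw [Finset.filter_filter, ← filter_pair_card S (a,b)]
  congr 1
  ext z
  simp [Prod.ext_iff, and_comm]

/-! ### Pointwise contribution formulas -/

lemma pt_gen (a b c d : Fin n) (hac : a ≠ c) (hbd : b ≠ d) (z : Fin n × Fin n) :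
    (((dd (a,b) z : ℤ) - dd (c,d) z).natAbs : ℤ)
    = (if z.1 = a then 1 else 0) + (if z.1 = c then 1 else 0)
      + (if z.2 = b then 1 else 0) + (if z.2 = d then 1 else 0)
      - (if z = (a,b) then 1 else 0) - (if z = (c,d) then 1 else 0)
      - 2*(if z = (a,d) then 1 else 0) - 2*(if z = (c,b) then 1 else 0) := by
  obtain ⟨u,v⟩ := z
  rcases eq_or_ne u a with rfl|hua <;> rcases eq_or_ne v b with rfl|hvb <;>
    rcases eq_or_ne u c with rfl|huc <;> rcases eq_or_ne v d with rfl|hvd <;>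
    simp_all [dd, Prod.ext_iff] <;> split_ifs <;> simp_all <;> omega

lemma pt_row (a b d : Fin n) (hbd : b ≠ d) (z : Fin n × Fin n) :
    (((dd (a,b) z : ℤ) - dd (a,d) z).natAbs : ℤ)
    = (if z.2 = b then 1 else 0) + (if z.2 = d then 1 else 0)
      + (if z = (a,b) then 1 else 0) + (if z = (a,d) then 1 else 0) := by
  obtain ⟨u,v⟩ := z
  rcases eq_or_ne u a with rfl|hua <;> rcases eq_or_ne v b with rfl|hvb <;>
    rcases eq_or_ne v d with rfl|hvd <;>
    simp_all [dd, Prod.ext_iff] <;> split_ifs <;> simp_all <;> omega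

lemma pt_col (a c b : Fin n) (hac : a ≠ c) (z : Fin n × Fin n) :
    (((dd (a,b) z : ℤ) - dd (c,b) z).natAbs : ℤ)
    = (if z.1 = a then 1 else 0) + (if z.1 = c then 1 else 0)
      + (if z = (a,b) then 1 else 0) + (if z = (c,b) then 1 else 0) := by
  obtain ⟨u,v⟩ := z
  rcases eq_or_ne u a with rfl|hua <;> rcases eq_or_ne u c with rfl|huc <;>
    rcases eq_or_ne v b with rfl|hvb <;>
    simp_all [dd, Prod.ext_iff] <;> split_ifs <;> simp_all <;> omega

/-! ### Exact formulas for `delS` -/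

lemma delS_cast (S : Finset (Fin n × Fin n)) (x y : Fin n × Fin n) :
    (delS S x y : ℤ) = ∑ z ∈ S, (((dd x z : ℤ) - dd y z).natAbs : ℤ) := by
  rw [delS]; push_cast; ring

lemma delS_gen (S : Finset (Fin n × Fin n)) (a b c d : Fin n) (hac : a ≠ c) (hbd : b ≠ d) :
    (delS S (a,b) (c,d) : ℤ)
    = rrS S a + rrS S c + ccS S b + ccS S d
      - ssv S (a,b) - ssv S (c,d) - 2*ssv S (a,d) - 2*ssv S (c,b) := by
  rw [delS_cast, Finset.sum_congr rfl (fun z _ => pt_gen a b c d hac hbd z)]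
  simp only [Finset.sum_sub_distrib, Finset.sum_add_distrib, ← Finset.mul_sum]
  rw [sum_ind_fst, sum_ind_fst, sum_ind_snd, sum_ind_snd, sum_ind_eq, sum_ind_eq, sum_ind_eq,
    sum_ind_eq]

lemma delS_row (S : Finset (Fin n × Fin n)) (a b d : Fin n) (hbd : b ≠ d) :
    (delS S (a,b) (a,d) : ℤ)
    = ccS S b + ccS S d + ssv S (a,b) + ssv S (a,d) := by
  rw [delS_cast, Finset.sum_congr rfl (fun z _ => pt_row a b d hbd z)]
  simp only [Finset.sum_add_distrib]
  rw [sum_ind_snd, sum_ind_snd, sum_ind_eq, sum_ind_eq]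

lemma delS_col (S : Finset (Fin n × Fin n)) (a c b : Fin n) (hac : a ≠ c) :
    (delS S (a,b) (c,b) : ℤ)
    = rrS S a + rrS S c + ssv S (a,b) + ssv S (c,b) := by
  rw [delS_cast, Finset.sum_congr rfl (fun z _ => pt_col a c b hac z)]
  simp only [Finset.sum_add_distrib]
  rw [sum_ind_fst, sum_ind_fst, sum_ind_eq, sum_ind_eq]

/-! ### Fin arithmetic helpers -/

variable [NeZero n]

open Fin.NatCast in
lemma fin_cast_ne (k : ℕ) (h1 : 0 < k) (h2 : k < n) : ((k : Fin n)) ≠ 0 := by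
  rw [Ne, Fin.natCast_eq_zero]
  intro hd
  have := Nat.le_of_dvd h1 hd
  omega

lemma fin_two_ne (h : 2 < n) : (2 : Fin n) ≠ 0 := by
  have := fin_cast_ne (n := n) 2 (by norm_num) h
  simpa using this

lemma fin_one_ne (h : 1 < n) : (1 : Fin n) ≠ 0 := by
  have := fin_cast_ne (n := n) 1 (by norm_num) h
  simpa using this

lemma fin_add_one_ne (h : 1 < n) (i : Fin n) : i + 1 ≠ i := by
  intro hyp
  apply fin_one_ne h
  have := congrArg (fun x => x - i) hyp
  simpa [add_comm, add_sub_cancel_right] using this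

lemma fin_sub_one_ne (h : 1 < n) (j : Fin n) : j - 1 ≠ j := by
  intro hyp
  have := congrArg (fun x => x + 1) hyp
  simp only [sub_add_cancel] at this
  exact fin_add_one_ne h j this.symm

lemma fin_no_two_cycle (h : 2 < n) {a c : Fin n} (h1 : a = c + 1) (h2 : c = a + 1) : False := by
  apply fin_two_ne h
  have hx : a + 2 = a := by
    calc a + 2 = a + 1 + 1 := by open Fin.CommRing in ring
    _ = c + 1 := by rw [← h2]
    _ = a := h1.symm
  have := congrArg (fun x => x - a) hx
  simpa [add_comm] using this

/-! ### The upper-bound witness set -/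

/-- The set `{(i,i)} ∪ {(i,i+1)}`: 2-regular and rectangle-free. -/
def S0 (n : ℕ) [NeZero n] : Finset (Fin n × Fin n) :=
  univ.image (fun i => (i, i)) ∪ univ.image (fun i => (i, i + 1))

lemma mem_S0 {p : Fin n × Fin n} : p ∈ S0 n ↔ p.2 = p.1 ∨ p.2 = p.1 + 1 := by
  obtain ⟨u, v⟩ := p
  constructor
  · intro hp
    simp only [S0, mem_union, mem_image, mem_univ, true_and, Prod.ext_iff] at hp
    rcases hp with ⟨i, rfl, rfl⟩ | ⟨i, rfl, rfl⟩ <;> simp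
  · intro hp
    simp only [S0, mem_union, mem_image, mem_univ, true_and, Prod.ext_iff]
    rcases hp with h | h
    · exact Or.inl ⟨u, rfl, h.symm⟩
    · exact Or.inr ⟨u, rfl, h.symm⟩

lemma S0_row (i : Fin n) :
    (S0 n).filter (fun z => z.1 = i) = {(i, i), (i, i + 1)} := by
  ext ⟨u, v⟩
  simp only [mem_filter, mem_S0, mem_insert, mem_singleton, Prod.ext_iff]
  constructor
  · rintro ⟨(h | h), rfl⟩
    · exact Or.inl ⟨rfl, h⟩
    · exact Or.inr ⟨rfl, h⟩
  · rintro (⟨rfl, rfl⟩ | ⟨rfl, rfl⟩) <;> simp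

lemma S0_col (j : Fin n) :
    (S0 n).filter (fun z => z.2 = j) = {(j, j), (j - 1, j)} := by
  ext ⟨u, v⟩
  simp only [mem_filter, mem_S0, mem_insert, mem_singleton, Prod.ext_iff]
  constructor
  · rintro ⟨(h | h), rfl⟩
    · exact Or.inl ⟨h.symm, rfl⟩
    · refine Or.inr ⟨?_, rfl⟩
      rw [h]
      exact (add_sub_cancel_right u 1).symm
  · rintro (⟨rfl, rfl⟩ | ⟨rfl, rfl⟩)
    · simp
    · exact ⟨Or.inr (by rw [sub_add_cancel]), rfl⟩

lemma S0_rr (h : 1 < n) (i : Fin n) : rrS (S0 n) i = 2 := by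
  rw [rrS, S0_row, card_insert_of_notMem, card_singleton]
  simp only [mem_singleton, Prod.ext_iff, not_and]
  intro _ h2
  exact (fin_add_one_ne h i h2.symm).elim

lemma S0_cc (h : 1 < n) (j : Fin n) : ccS (S0 n) j = 2 := by
  rw [ccS, S0_col, card_insert_of_notMem, card_singleton]
  simp only [mem_singleton, Prod.ext_iff, not_and]
  intro h1
  exact ((fin_sub_one_ne h j h1.symm).elim)

lemma S0_card (h : 1 < n) : (S0 n).card = 2 * n := by
  rw [S0, card_union_of_disjoint, card_image_of_injective _ (fun a b hab => (Prod.ext_iff.mp hab).1),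
    card_image_of_injective _ (fun a b hab => (Prod.ext_iff.mp hab).1), card_univ, Fintype.card_fin]
  · ring
  · rw [Finset.disjoint_left]
    rintro p hp hq
    simp only [mem_image, mem_univ, true_and, Prod.ext_iff] at hp hq
    obtain ⟨i, hi1, hi2⟩ := hp
    obtain ⟨k, hk1, hk2⟩ := hq
    have hki : k = i := hk1.trans hi1.symm
    subst hki
    apply fin_add_one_ne h k
    rw [hk2, ← hi2]

lemma S0_rect_free (h : 2 < n) {a b c d : Fin n} (hac : a ≠ c) (hbd : b ≠ d)
    (h1 : (a,b) ∈ S0 n) (h2 : (a,d) ∈ S0 n) (h3 : (c,b) ∈ S0 n) (h4 : (c,d) ∈ S0 n) : False := by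
  rw [mem_S0] at h1 h2 h3 h4
  simp only at h1 h2 h3 h4
  rcases h1 with rfl | rfl <;> rcases h2 with rfl | rfl <;>
    rcases h3 with h3 | h3 <;> rcases h4 with h4 | h4 <;>
    first
    | exact hbd rfl
    | exact hac h3
    | exact hac h4
    | exact hac h3.symm
    | exact hac h4.symm
    | exact hac (add_right_cancel h3)
    | exact hac (add_right_cancel h4)
    | exact fin_no_two_cycle h h3 h4.symm
    | exact fin_no_two_cycle h h4 h3.symm
    | exact fin_no_two_cycle h h3.symm h4
    | exact fin_no_two_cycle h h4.symm h3
    | exact fin_no_two_cycle h h3 h4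
    | exact fin_no_two_cycle h h4 h3

lemma S0_weakRes (hn : 4 ≤ n) : weakRes 3 (S0 n) := by
  have h1 : 1 < n := by omega
  have h2 : 2 < n := by omega
  rintro ⟨a, b⟩ ⟨c, d⟩ hxy
  rcases eq_or_ne a c with rfl | hac
  · have hbd : b ≠ d := fun h => hxy (by rw [h])
    have hf := delS_row (S0 n) a b d hbd
    rw [S0_cc h1, S0_cc h1] at hf
    have g1 := ssv_le_one (S0 n) (a, b)
    omega
  · rcases eq_or_ne b d with rfl | hbd
    · have hf := delS_col (S0 n) a c b hac
      rw [S0_rr h1, S0_rr h1] at hf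
      omega
    · have hf := delS_gen (S0 n) a b c d hac hbd
      rw [S0_rr h1, S0_rr h1, S0_cc h1, S0_cc h1] at hf
      have g1 := ssv_le_one (S0 n) (a, b)
      have g2 := ssv_le_one (S0 n) (c, d)
      have g3 := ssv_le_one (S0 n) (a, d)
      have g4 := ssv_le_one (S0 n) (c, b)
      have key : ssv (S0 n) (a,b) = 0 ∨ ssv (S0 n) (c,d) = 0 ∨ ssv (S0 n) (a,d) = 0 ∨
          ssv (S0 n) (c,b) = 0 := by
        by_contra hno
        push_neg at hno
        obtain ⟨k1, k2, k3, k4⟩ := hno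
        exact S0_rect_free h2 hac hbd (mem_of_ssv_ne _ k1) (mem_of_ssv_ne _ k3)
          (mem_of_ssv_ne _ k4) (mem_of_ssv_ne _ k2)
      omega

/-! ### Lower bound -/

lemma lower_bound (hn : 4 ≤ n) (S : Finset (Fin n × Fin n)) (hS : weakRes 3 S) :
    2 * n ≤ S.card := by
  by_contra hcard
  push_neg at hcard
  -- pair conditions
  have cond_gen : ∀ a b c d : Fin n, a ≠ c → b ≠ d →
      (3:ℤ) ≤ rrS S a + rrS S c + ccS S b + ccS S d
        - ssv S (a,b) - ssv S (c,d) - 2*ssv S (a,d) - 2*ssv S (c,b) := by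
    intro a b c d hac hbd
    have := hS (a,b) (c,d) (fun h => hac (congrArg Prod.fst h))
    have hf := delS_gen S a b c d hac hbd
    omega
  have cond_row : ∀ a b d : Fin n, b ≠ d →
      (3:ℤ) ≤ ccS S b + ccS S d + ssv S (a,b) + ssv S (a,d) := by
    intro a b d hbd
    have := hS (a,b) (a,d) (fun h => hbd (congrArg Prod.snd h))
    have hf := delS_row S a b d hbd
    omega
  have cond_col : ∀ a c b : Fin n, a ≠ c →
      (3:ℤ) ≤ rrS S a + rrS S c + ssv S (a,b) + ssv S (c,b) := by
    intro a c b hac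
    have := hS (a,b) (c,b) (fun h => hac (congrArg Prod.fst h))
    have hf := delS_col S a c b hac
    omega
  -- pairwise column sums are ≥ 3
  have hc2 : ∀ b d : Fin n, b ≠ d → 3 ≤ ccS S b + ccS S d := by
    intro b d hbd
    by_contra hlt
    push_neg at hlt
    have hsum : ∑ a : Fin n, (ssv S (a,b) + ssv S (a,d)) = ccS S b + ccS S d := by
      rw [Finset.sum_add_distrib, ← ccS_eq_sum, ← ccS_eq_sum]
    have hex : ∃ a : Fin n, ssv S (a,b) + ssv S (a,d) = 0 := by
      by_contra hall
      push_neg at hall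
      have hone : ∀ a ∈ (univ : Finset (Fin n)), 1 ≤ ssv S (a,b) + ssv S (a,d) :=
        fun a _ => Nat.one_le_iff_ne_zero.mpr (hall a)
      have hk := Finset.sum_le_sum hone
      rw [hsum] at hk
      simp only [Finset.sum_const, card_univ, Fintype.card_fin, smul_eq_mul, mul_one] at hk
      omega
    obtain ⟨a, ha⟩ := hex
    have := cond_row a b d hbd
    omega
  have hr2 : ∀ a c : Fin n, a ≠ c → 3 ≤ rrS S a + rrS S c := by
    intro a c hac
    by_contra hlt
    push_neg at hlt
    have hsum : ∑ b : Fin n, (ssv S (a,b) + ssv S (c,b)) = rrS S a + rrS S c := by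
      rw [Finset.sum_add_distrib, ← rrS_eq_sum, ← rrS_eq_sum]
    have hex : ∃ b : Fin n, ssv S (a,b) + ssv S (c,b) = 0 := by
      by_contra hall
      push_neg at hall
      have hone : ∀ b ∈ (univ : Finset (Fin n)), 1 ≤ ssv S (a,b) + ssv S (c,b) :=
        fun b _ => Nat.one_le_iff_ne_zero.mpr (hall b)
      have hk := Finset.sum_le_sum hone
      rw [hsum] at hk
      simp only [Finset.sum_const, card_univ, Fintype.card_fin, smul_eq_mul, mul_one] at hk
      omega
    obtain ⟨b, hb⟩ := hex
    have := cond_col a c b hac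
    omega
  have htotr := sum_rrS S
  have htotc_aux : ∀ T : Finset (Fin n × Fin n), ∑ j : Fin n, ccS T j = T.card := by
    intro T
    rw [Finset.card_eq_sum_card_fiberwise (f := Prod.snd) (t := univ) (fun x _ => mem_univ _)]
    rfl
  have htotc := htotc_aux S
  -- a light row
  have hex_i0 : ∃ i0 : Fin n, rrS S i0 ≤ 1 := by
    by_contra hall
    push_neg at hall
    have hone : ∀ i ∈ (univ : Finset (Fin n)), 2 ≤ rrS S i := fun i _ => hall i
    have hk := Finset.sum_le_sum hone
    rw [htotr] at hk
    simp only [Finset.sum_const, card_univ, Fintype.card_fin, smul_eq_mul] at hk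
    omega
  obtain ⟨i0, hi0⟩ := hex_i0
  have hrow_ge : ∀ c : Fin n, c ≠ i0 → 2 ≤ rrS S c := by
    intro c hc
    have := hr2 i0 c (fun h => hc h.symm)
    omega
  have herase_sub : ∑ i ∈ univ.erase i0, rrS S i ≤ S.card := by
    rw [← htotr]
    exact Finset.sum_le_sum_of_subset (Finset.erase_subset _ _)
  have herase_card : (univ.erase i0).card = n - 1 := by
    rw [Finset.card_erase_of_mem (mem_univ _), card_univ, Fintype.card_fin]
  have hi0_one : rrS S i0 = 1 := by
    rcases Nat.eq_or_lt_of_le hi0 with h | h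
    · exact h
    · exfalso
      have hz : rrS S i0 = 0 := by omega
      have h3all : ∀ c ∈ univ.erase i0, 3 ≤ rrS S c := by
        intro c hc
        have hcne : c ≠ i0 := (Finset.mem_erase.mp hc).1
        have := hr2 i0 c (fun h => hcne h.symm)
        omega
      have hk := Finset.sum_le_sum h3all
      simp only [Finset.sum_const, smul_eq_mul, herase_card] at hk
      omega
  have hrow_eq : ∀ c : Fin n, c ≠ i0 → rrS S c = 2 := by
    intro c hc
    refine le_antisymm ?_ (hrow_ge c hc)
    by_contra h3
    push_neg at h3
    have hsplit1 : ∑ i ∈ univ.erase i0, rrS S i + rrS S i0 = ∑ i : Fin n, rrS S i :=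
      Finset.sum_erase_add _ _ (mem_univ _)
    have hcmem : c ∈ univ.erase i0 := Finset.mem_erase.mpr ⟨hc, mem_univ _⟩
    have hsplit2 : ∑ i ∈ (univ.erase i0).erase c, rrS S i + rrS S c
        = ∑ i ∈ univ.erase i0, rrS S i := Finset.sum_erase_add _ _ hcmem
    have h2all : ∀ i ∈ (univ.erase i0).erase c, 2 ≤ rrS S i := by
      intro i hi
      exact hrow_ge i (Finset.mem_erase.mp (Finset.mem_of_mem_erase hi)).1
    have hk := Finset.sum_le_sum h2all
    simp only [Finset.sum_const, smul_eq_mul] at hk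
    have hcard2 : ((univ.erase i0).erase c).card = n - 2 := by
      rw [Finset.card_erase_of_mem hcmem, herase_card]
      omega
    rw [hcard2] at hk
    omega
  -- a light column, symmetrically
  have hex_j0 : ∃ j0 : Fin n, ccS S j0 ≤ 1 := by
    by_contra hall
    push_neg at hall
    have hone : ∀ j ∈ (univ : Finset (Fin n)), 2 ≤ ccS S j := fun j _ => hall j
    have hk := Finset.sum_le_sum hone
    rw [htotc] at hk
    simp only [Finset.sum_const, card_univ, Fintype.card_fin, smul_eq_mul] at hk
    omega
  obtain ⟨j0, hj0⟩ := hex_j0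
  have hcol_ge : ∀ d : Fin n, d ≠ j0 → 2 ≤ ccS S d := by
    intro d hd
    have := hc2 j0 d (fun h => hd h.symm)
    omega
  have herase_subc : ∑ j ∈ univ.erase j0, ccS S j ≤ S.card := by
    rw [← htotc]
    exact Finset.sum_le_sum_of_subset (Finset.erase_subset _ _)
  have herase_cardc : (univ.erase j0).card = n - 1 := by
    rw [Finset.card_erase_of_mem (mem_univ _), card_univ, Fintype.card_fin]
  have hj0_one : ccS S j0 = 1 := by
    rcases Nat.eq_or_lt_of_le hj0 with h | h
    · exact h
    · exfalso
      have hz : ccS S j0 = 0 := by omega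
      have h3all : ∀ d ∈ univ.erase j0, 3 ≤ ccS S d := by
        intro d hd
        have hdne : d ≠ j0 := (Finset.mem_erase.mp hd).1
        have := hc2 j0 d (fun h => hdne h.symm)
        omega
      have hk := Finset.sum_le_sum h3all
      simp only [Finset.sum_const, smul_eq_mul, herase_cardc] at hk
      omega
  have hcol_eq : ∀ d : Fin n, d ≠ j0 → ccS S d = 2 := by
    intro d hd
    refine le_antisymm ?_ (hcol_ge d hd)
    by_contra h3
    push_neg at h3
    have hdmem : d ∈ univ.erase j0 := Finset.mem_erase.mpr ⟨hd, mem_univ _⟩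
    have hsplit2 : ∑ j ∈ (univ.erase j0).erase d, ccS S j + ccS S d
        = ∑ j ∈ univ.erase j0, ccS S j := Finset.sum_erase_add _ _ hdmem
    have h2all : ∀ j ∈ (univ.erase j0).erase d, 2 ≤ ccS S j := by
      intro j hj
      exact hcol_ge j (Finset.mem_erase.mp (Finset.mem_of_mem_erase hj)).1
    have hk := Finset.sum_le_sum h2all
    simp only [Finset.sum_const, smul_eq_mul] at hk
    have hcard2 : ((univ.erase j0).erase d).card = n - 2 := by
      rw [Finset.card_erase_of_mem hdmem, herase_cardc]
      omega
    have hsplit1c : ∑ j ∈ univ.erase j0, ccS S j + ccS S j0 = ∑ j : Fin n, ccS S j :=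
      Finset.sum_erase_add _ _ (mem_univ _)
    rw [hcard2] at hk
    omega
  -- unique elements of the light row and light column
  obtain ⟨p, hp⟩ : ∃ p, S.filter (fun z => z.1 = i0) = {p} :=
    Finset.card_eq_one.mp hi0_one
  have hpS : p ∈ S ∧ p.1 = i0 := by
    have : p ∈ S.filter (fun z => z.1 = i0) := by rw [hp]; exact mem_singleton_self p
    exact Finset.mem_filter.mp this
  have hrow_mem : ∀ w ∈ S, w.1 = i0 → w = p := by
    intro w hw hw1
    have : w ∈ S.filter (fun z => z.1 = i0) := Finset.mem_filter.mpr ⟨hw, hw1⟩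
    rw [hp, mem_singleton] at this
    exact this
  obtain ⟨q, hq⟩ : ∃ q, S.filter (fun z => z.2 = j0) = {q} :=
    Finset.card_eq_one.mp hj0_one
  have hqS : q ∈ S ∧ q.2 = j0 := by
    have : q ∈ S.filter (fun z => z.2 = j0) := by rw [hq]; exact mem_singleton_self q
    exact Finset.mem_filter.mp this
  have hcol_mem : ∀ w ∈ S, w.2 = j0 → w = q := by
    intro w hw hw2
    have : w ∈ S.filter (fun z => z.2 = j0) := Finset.mem_filter.mpr ⟨hw, hw2⟩
    rw [hq, mem_singleton] at this
    exact this
  by_cases hij : (i0, j0) ∈ S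
  · -- the light row and column intersect inside S
    have hpe : p = (i0, j0) := (hrow_mem (i0,j0) hij rfl).symm
    have hqe : q = (i0, j0) := (hcol_mem (i0,j0) hij rfl).symm
    -- pick another row
    obtain ⟨c, hc⟩ : ∃ c : Fin n, c ≠ i0 := by
      have h1 : 1 < n := by omega
      refine ⟨i0 + 1, fin_add_one_ne h1 i0⟩
    have hrc : rrS S c = 2 := hrow_eq c hc
    obtain ⟨w, hw⟩ : ∃ w, w ∈ S.filter (fun z => z.1 = c) := by
      have : (S.filter (fun z => z.1 = c)).card ≠ 0 := by rw [← rrS]; omega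
      exact Finset.card_ne_zero.mp this |>.exists_mem
    obtain ⟨w1, b⟩ := w
    obtain ⟨hwS, hwc⟩ := Finset.mem_filter.mp hw
    simp only at hwc
    subst hwc
    have hbj : b ≠ j0 := by
      intro h
      have := hcol_mem (w1, b) hwS h
      rw [hqe] at this
      exact hc (Prod.ext_iff.mp this).1
    have s1 : ssv S (i0, b) = 0 := by
      apply ssv_eq_zero
      intro hmem
      have := hrow_mem (i0, b) hmem rfl
      rw [hpe] at this
      exact hbj (Prod.ext_iff.mp this).2
    have s2 : ssv S (w1, j0) = 0 := by
      apply ssv_eq_zero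
      intro hmem
      have := hcol_mem (w1, j0) hmem rfl
      rw [hqe] at this
      exact hc (Prod.ext_iff.mp this).1
    have s3 : ssv S (i0, j0) = 1 := ssv_eq_one S hij
    have s4 : ssv S (w1, b) = 1 := ssv_eq_one S hwS
    have hcb : ccS S b = 2 := hcol_eq b hbj
    have := cond_gen i0 b w1 j0 (fun h => hc h.symm) hbj
    rw [hi0_one, hrc, hcb, hj0_one, s1, s2, s3, s4] at this
    omega
  · -- the light row and column are disjoint from each other in S
    set β := p.2 with hβ
    set α := q.1 with hα
    have hpe : p = (i0, β) := by rw [hβ, ← hpS.2]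
    have hqe : q = (α, j0) := by rw [hα, ← hqS.2]
    have hβj : β ≠ j0 := by
      intro h
      apply hij
      have : p = (i0, j0) := by rw [hpe, h]
      exact this ▸ hpS.1
    have hαi : α ≠ i0 := by
      intro h
      apply hij
      have : q = (i0, j0) := by rw [hqe, h]
      exact this ▸ hqS.1
    have s1 : ssv S (i0, j0) = 0 := ssv_eq_zero S hij
    have s2 : ssv S (i0, β) = 1 := ssv_eq_one S (hpe ▸ hpS.1)
    have s3 : ssv S (α, j0) = 1 := ssv_eq_one S (hqe ▸ hqS.1)
    have s4 := ssv_le_one S (α, β)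
    have hrα : rrS S α = 2 := hrow_eq α hαi
    have hcβ : ccS S β = 2 := hcol_eq β hβj
    have := cond_gen i0 j0 α β (fun h => hαi h.symm) (fun h => hβj h.symm)
    rw [hi0_one, hrα, hj0_one, hcβ, s1, s2, s3] at this
    omega

end Aux

theorem stmt_7 (n : ℕ) (hn : 4 ≤ n) : wdim n 3 = 2 * n := by
  haveI : NeZero n := ⟨by omega⟩
  have h1 : 1 < n := by omega
  have hmem : 2 * n ∈ {m | ∃ S : Finset (Fin n × Fin n), weakRes 3 S ∧ S.card = m} :=
    ⟨S0 n, S0_weakRes hn, S0_card h1⟩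
  refine le_antisymm (Nat.sInf_le hmem) (le_csInf ⟨2 * n, hmem⟩ ?_)
  rintro m ⟨S, hS, rfl⟩
  exact lower_bound hn S hS
end

section
/- For every integer n ≥ 4, the weak 2n-metric dimension of K_n × K_n equals n² − 1. -/
open Finset

lemma termA {n : ℕ} (x y z : Fin n × Fin n) (h1 : x.1 ≠ y.1) (h2 : x.2 = y.2) :
    ((dd x z : ℤ) - (dd y z : ℤ)).natAbs =
      if z = x ∨ z = y then 2 else if z.1 = x.1 ∨ z.1 = y.1 then 1 else 0 := by
  rcases x with ⟨x1, x2⟩; rcases y with ⟨y1, y2⟩; rcases z with ⟨z1, z2⟩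
  simp only [dd, Prod.mk.injEq] at *
  subst h2
  split_ifs <;> simp_all <;> omega

lemma sum_ite_single {n : ℕ} (c : Fin n) (u v : ℕ) :
    ∑ b : Fin n, (if b = c then u else v) = u + (n - 1) * v := by
  rw [← Finset.add_sum_erase _ _ (mem_univ c), if_pos rfl,
    Finset.sum_congr rfl (fun b hb => if_neg (Finset.ne_of_mem_erase hb)),
    Finset.sum_const, card_erase_of_mem (mem_univ c), card_univ, Fintype.card_fin, smul_eq_mul]

lemma sum_ite_pair {n : ℕ} (c d : Fin n) (hcd : c ≠ d) (u v w : ℕ) :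
    ∑ b : Fin n, (if b = c then u else if b = d then v else w) = u + v + (n - 2) * w := by
  have hd : d ∈ (univ : Finset (Fin n)).erase c := by
    simp [Finset.mem_erase, hcd.symm]
  have h1 : ∑ b ∈ ((univ : Finset (Fin n)).erase c).erase d,
      (if b = c then u else if b = d then v else w) = (n - 2) * w := by
    rw [Finset.sum_congr rfl (fun b hb => ?_), Finset.sum_const,
      card_erase_of_mem hd, card_erase_of_mem (mem_univ c), card_univ, Fintype.card_fin,
      smul_eq_mul]
    · rw [Nat.sub_sub]
    · rw [if_neg (Finset.ne_of_mem_erase (Finset.mem_of_mem_erase hb)),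
        if_neg (Finset.ne_of_mem_erase hb)]
  rw [← Finset.add_sum_erase _ _ (mem_univ c), if_pos rfl, ← Finset.add_sum_erase _ _ hd,
    if_neg hcd.symm, if_pos rfl, h1]
  ring

lemma key1_s11 {n : ℕ} (x y : Fin n × Fin n) (h1 : x.1 ≠ y.1) (h2 : x.2 = y.2) :
    delS univ x y = 2 * n + 2 := by
  have hn : 1 ≤ n := x.1.pos
  unfold delS
  rw [Fintype.sum_prod_type]
  have hrow : ∀ a : Fin n, ∑ b : Fin n, ((dd x (a, b) : ℤ) - (dd y (a, b) : ℤ)).natAbs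
      = (if a = x.1 then n + 1 else if a = y.1 then n + 1 else 0) := by
    intro a
    have hpt : ∀ b : Fin n, ((dd x (a, b) : ℤ) - (dd y (a, b) : ℤ)).natAbs =
        if a = x.1 then (if b = x.2 then 2 else 1)
        else if a = y.1 then (if b = y.2 then 2 else 1) else 0 := by
      intro b
      rw [termA x y (a, b) h1 h2]
      rcases x with ⟨x1, x2⟩; rcases y with ⟨y1, y2⟩
      simp only [Prod.mk.injEq] at *
      subst h2
      split_ifs <;> simp_all
    rw [Finset.sum_congr rfl (fun b _ => hpt b)]
    split_ifs with ha hb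
    · rw [sum_ite_single]; omega
    · rw [sum_ite_single]; omega
    · simp
  rw [Finset.sum_congr rfl (fun a _ => hrow a), sum_ite_pair x.1 y.1 h1]
  omega

lemma key2_s11 {n : ℕ} (x y : Fin n × Fin n) (hn : 4 ≤ n) (h1 : x.1 ≠ y.1) (h2 : x.2 ≠ y.2) :
    2 * n + 2 ≤ delS univ x y := by
  unfold delS
  rw [Fintype.sum_prod_type]
  have hrow : ∀ a : Fin n, ∑ b : Fin n, ((dd x (a, b) : ℤ) - (dd y (a, b) : ℤ)).natAbs
      = (if a = x.1 then n - 1 else if a = y.1 then n - 1 else 2) := by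
    intro a
    have hpt : ∀ b : Fin n, ((dd x (a, b) : ℤ) - (dd y (a, b) : ℤ)).natAbs =
        if a = x.1 then (if b = y.2 then 0 else 1)
        else if a = y.1 then (if b = x.2 then 0 else 1)
        else (if b = x.2 then 1 else if b = y.2 then 1 else 0) := by
      intro b
      rcases x with ⟨x1, x2⟩; rcases y with ⟨y1, y2⟩
      simp only [dd, Prod.mk.injEq] at *
      split_ifs <;> omega
    rw [Finset.sum_congr rfl (fun b _ => hpt b)]
    split_ifs with ha hb
    · rw [sum_ite_single]; omega
    · rw [sum_ite_single]; omega
    · rw [sum_ite_pair x.2 y.2 h2]; omega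
  rw [Finset.sum_congr rfl (fun a _ => hrow a), sum_ite_pair x.1 y.1 h1]
  omega

lemma dd_swap {n : ℕ} (x z : Fin n × Fin n) : dd x.swap z.swap = dd x z := by
  rcases x with ⟨a, b⟩; rcases z with ⟨c, d⟩
  simp only [dd, Prod.swap_prod_mk, Prod.mk.injEq, ne_eq]
  split_ifs <;> first | rfl | tauto

lemma delS_univ_swap {n : ℕ} (x y : Fin n × Fin n) :
    delS univ x.swap y.swap = delS univ x y := by
  unfold delS
  exact Fintype.sum_equiv (Equiv.prodComm (Fin n) (Fin n)) _ _
    (fun z => by simp only [Equiv.prodComm_apply]; rw [← dd_swap x z.swap, ← dd_swap y z.swap, Prod.swap_swap])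

lemma key1' {n : ℕ} (x y : Fin n × Fin n) (h1 : x.1 = y.1) (h2 : x.2 ≠ y.2) :
    delS univ x y = 2 * n + 2 := by
  rw [← delS_univ_swap]
  exact key1_s11 x.swap y.swap h2 h1

lemma delS_univ_lb {n : ℕ} (x y : Fin n × Fin n) (hn : 4 ≤ n) (hxy : x ≠ y) :
    2 * n + 2 ≤ delS univ x y := by
  by_cases h1 : x.1 = y.1
  · have h2 : x.2 ≠ y.2 := fun h2 => hxy (Prod.ext h1 h2)
    rw [key1' x y h1 h2]
  · by_cases h2 : x.2 = y.2
    · rw [key1_s11 x y h1 h2]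
    · exact key2_s11 x y hn h1 h2

lemma delS_split {n : ℕ} (S : Finset (Fin n × Fin n)) (w x y : Fin n × Fin n) (hw : w ∈ S) :
    delS S x y = ((dd x w : ℤ) - (dd y w : ℤ)).natAbs + delS (S.erase w) x y :=
  (Finset.add_sum_erase _ _ hw).symm

lemma delS_mono {n : ℕ} {S T : Finset (Fin n × Fin n)} (h : S ⊆ T) (x y : Fin n × Fin n) :
    delS S x y ≤ delS T x y :=
  Finset.sum_le_sum_of_subset h

lemma trm_le {n : ℕ} (x y z : Fin n × Fin n) : ((dd x z : ℤ) - (dd y z : ℤ)).natAbs ≤ 2 := by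
  have h1 : dd x z ≤ 2 := by unfold dd; split_ifs <;> omega
  have h2 : dd y z ≤ 2 := by unfold dd; split_ifs <;> omega
  omega

lemma trm_self {n : ℕ} (x y : Fin n × Fin n) (hxy : x ≠ y) (h : x.1 = y.1 ∨ x.2 = y.2) :
    ((dd x x : ℤ) - (dd y x : ℤ)).natAbs = 2 := by
  have h1 : dd x x = 0 := by simp [dd]
  have h2 : dd y x = 2 := by
    unfold dd
    rw [if_neg (fun e => hxy e.symm), if_neg (by rcases h with h | h <;> simp [h.symm])]
  rw [h1, h2]; rfl

lemma trm_self' {n : ℕ} (x y : Fin n × Fin n) (hxy : x ≠ y) (h : x.1 = y.1 ∨ x.2 = y.2) :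
    ((dd x y : ℤ) - (dd y y : ℤ)).natAbs = 2 := by
  have h1 : dd y y = 0 := by simp [dd]
  have h2 : dd x y = 2 := by
    unfold dd
    rw [if_neg hxy, if_neg (by rcases h with h | h <;> simp [h])]
  rw [h1, h2]; rfl

lemma upperKR {n : ℕ} (hn : 4 ≤ n) (w : Fin n × Fin n) : weakRes (2 * n) (univ.erase w) := by
  intro x y hxy
  have h1 := delS_univ_lb x y hn hxy
  have h2 := delS_split univ w x y (mem_univ w)
  have h3 := trm_le x y w
  omega

lemma lowerKR {n : ℕ} (hn : 4 ≤ n) (S : Finset (Fin n × Fin n)) (hS : weakRes (2 * n) S) :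
    n ^ 2 - 1 ≤ S.card := by
  by_contra hlt
  push_neg at hlt
  have hp : n ^ 2 = n * n := by ring
  have hcard : Fintype.card (Fin n × Fin n) = n * n := by simp
  have hSu : S ⊆ univ := subset_univ S
  have hle : S.card ≤ n * n := by
    have := card_le_card hSu
    rwa [card_univ, hcard] at this
  have hsd : 1 < (univ \ S).card := by
    rw [card_sdiff_of_subset hSu, card_univ, hcard]
    have h16 : 16 ≤ n * n := Nat.mul_le_mul hn hn
    omega
  obtain ⟨w1, hw1, w2, hw2, hne⟩ := Finset.one_lt_card.mp hsd
  have hw1S : w1 ∉ S := (Finset.mem_sdiff.mp hw1).2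
  have hw2S : w2 ∉ S := (Finset.mem_sdiff.mp hw2).2
  have hsub : S ⊆ (univ.erase w1).erase w2 := by
    intro z hz
    simp only [Finset.mem_erase, Finset.mem_univ, and_true]
    exact ⟨fun e => hw2S (e ▸ hz), fun e => hw1S (e ▸ hz)⟩
  have main : ∀ x y : Fin n × Fin n, x ≠ y → delS univ x y = 2 * n + 2 →
      3 ≤ ((dd x w1 : ℤ) - (dd y w1 : ℤ)).natAbs + ((dd x w2 : ℤ) - (dd y w2 : ℤ)).natAbs →
      False := by
    intro x y hxy hEq h3
    have hk := hS x y hxy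
    have hmono := delS_mono hsub x y
    have hs1 := delS_split univ w1 x y (mem_univ w1)
    have hs2 := delS_split (univ.erase w1) w2 x y
      (by simp [Finset.mem_erase, hne.symm])
    omega
  by_cases hc1 : w1.1 = w2.1
  · have hc2 : w1.2 ≠ w2.2 := fun h => hne (Prod.ext hc1 h)
    exact main w1 w2 hne (key1' w1 w2 hc1 hc2)
      (by rw [trm_self w1 w2 hne (Or.inl hc1), trm_self' w1 w2 hne (Or.inl hc1)]; omega)
  · by_cases hc2 : w1.2 = w2.2
    · exact main w1 w2 hne (key1_s11 w1 w2 hc1 hc2)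
        (by rw [trm_self w1 w2 hne (Or.inr hc2), trm_self' w1 w2 hne (Or.inr hc2)]; omega)
    · set y : Fin n × Fin n := (w2.1, w1.2) with hy
      have h1 : w1.1 ≠ y.1 := hc1
      have h2 : w1.2 = y.2 := rfl
      have hxy : w1 ≠ y := fun e => h1 (congrArg Prod.fst e)
      have hw2y : w2 ≠ y := fun e => hc2 ((congrArg Prod.snd e).symm)
      have t1 : ((dd w1 w1 : ℤ) - (dd y w1 : ℤ)).natAbs = 2 :=
        trm_self w1 y hxy (Or.inr h2)
      have t2 : ((dd w1 w2 : ℤ) - (dd y w2 : ℤ)).natAbs = 1 := by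
        rw [termA w1 y w2 h1 h2, if_neg (by push_neg; exact ⟨hne.symm, hw2y⟩),
          if_pos (Or.inr rfl)]
      exact main w1 y hxy (key1_s11 w1 y h1 h2) (by rw [t1, t2])

theorem stmt_11 (n : ℕ) (hn : 4 ≤ n) : wdim n (2 * n) = n ^ 2 - 1 := by
  have hn0 : 0 < n := by omega
  set w0 : Fin n × Fin n := (⟨0, hn0⟩, ⟨0, hn0⟩) with hw0
  have hmem : (n ^ 2 - 1) ∈ {m | ∃ S : Finset (Fin n × Fin n), weakRes (2 * n) S ∧ S.card = m} := by
    refine ⟨univ.erase w0, upperKR hn w0, ?_⟩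
    rw [card_erase_of_mem (mem_univ _), card_univ]
    have h1 : Fintype.card (Fin n × Fin n) = n * n := by simp
    have hp : n ^ 2 = n * n := by ring
    omega
  unfold wdim
  exact le_antisymm (Nat.sInf_le hmem)
    (le_csInf ⟨_, hmem⟩ (by rintro m ⟨S, hS, rfl⟩; exact lowerKR hn S hS))
end

section
/- Let n ≥ 4 and t ∈ [n−1], and let S be a weak (2n−2t)-resolving set of K_n × K_n. Then for any i, i' ∈ [n], the number of vertices of the complement of S lying in L_i ∪ L_{i'} is at most 2t if there exists j with both (i,j) ∉ S and (i',j) ∉ S, and at most 2t+1 otherwise. -/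
open Finset

lemma Lv_card {n : ℕ} (i : Fin n) : (Lv i).card = n := by
  have : (Lv i) = {i} ×ˢ univ := by
    ext ⟨a, b⟩
    simp [Lv, Finset.mem_product, eq_comm]
  rw [this, Finset.card_product]
  simp

lemma term_bound {n : ℕ} (i i' j : Fin n) (hii : i ≠ i') (z : Fin n × Fin n) :
    ((dd (i, j) z : ℤ) - (dd (i', j) z : ℤ)).natAbs ≤
      (if z.1 = i ∨ z.1 = i' then 1 else 0) +
      (if z = (i, j) ∨ z = (i', j) then 1 else 0) := by
  obtain ⟨a, b⟩ := z
  unfold dd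
  by_cases h1 : a = i <;> by_cases h2 : a = i' <;> by_cases h3 : b = j <;>
    simp_all [Prod.ext_iff, hii, Ne.symm hii] <;> split_ifs <;> simp_all

theorem stmt_13 (n t : ℕ) (hn : 4 ≤ n) (ht : 1 ≤ t) (ht' : t ≤ n - 1)
    (S : Finset (Fin n × Fin n)) (hS : weakRes (2 * n - 2 * t) S)
    (i i' : Fin n) (hii : i ≠ i') :
    ((∃ j : Fin n, (i, j) ∉ S ∧ (i', j) ∉ S) →
        ((Lv i ∪ Lv i') \ S).card ≤ 2 * t) ∧
    (((Lv i ∪ Lv i') \ S).card ≤ 2 * t + 1) := by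
  set A := Lv i ∪ Lv i' with hA
  have hdisj : Disjoint (Lv i) (Lv i') := by
    rw [Finset.disjoint_left]
    intro p hp hp'
    simp [Lv] at hp hp'
    exact hii (hp ▸ hp')
  have hAcard : A.card = 2 * n := by
    rw [hA, Finset.card_union_of_disjoint hdisj, Lv_card, Lv_card]; ring
  have hsplit : (A ∩ S).card + (A \ S).card = 2 * n := by
    rw [Finset.card_inter_add_card_sdiff, hAcard]
  have hmemA : ∀ z : Fin n × Fin n, z ∈ A ↔ (z.1 = i ∨ z.1 = i') := by
    intro z; simp [hA, Lv]
  -- key bound for any column j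
  have key : ∀ j : Fin n,
      delS S (i, j) (i', j) ≤ (A ∩ S).card + (S.filter (fun z => z = (i, j) ∨ z = (i', j))).card := by
    intro j
    have h1 : delS S (i, j) (i', j) ≤
        ∑ z ∈ S, ((if z.1 = i ∨ z.1 = i' then 1 else 0) +
          (if z = (i, j) ∨ z = (i', j) then 1 else 0)) := by
      apply Finset.sum_le_sum
      intro z _
      exact term_bound i i' j hii z
    rw [Finset.sum_add_distrib] at h1
    have h2 : (∑ z ∈ S, (if z.1 = i ∨ z.1 = i' then 1 else 0)) = (A ∩ S).card := by
      rw [← Finset.card_filter]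
      congr 1
      ext z
      simp [hmemA z, and_comm]
    have h3 : (∑ z ∈ S, (if z = (i, j) ∨ z = (i', j) then 1 else 0)) =
        (S.filter (fun z => z = (i, j) ∨ z = (i', j))).card :=
      (Finset.card_filter _ _).symm
    omega
  have hlow : ∀ j : Fin n, 2 * n - 2 * t ≤ delS S (i, j) (i', j) := by
    intro j
    apply hS
    simp [Prod.ext_iff, hii]
  constructor
  · rintro ⟨j, hj1, hj2⟩
    have hfe : (S.filter (fun z => z = (i, j) ∨ z = (i', j))).card = 0 := by
      rw [Finset.card_eq_zero, Finset.filter_eq_empty_iff]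
      rintro z hz (rfl | rfl)
      · exact hj1 hz
      · exact hj2 hz
    have := key j
    have := hlow j
    omega
  · -- general bound
    by_cases hall : ∃ j : Fin n, (i, j) ∉ S ∨ (i', j) ∉ S
    · obtain ⟨j, hj⟩ := hall
      have hfe : (S.filter (fun z => z = (i, j) ∨ z = (i', j))).card ≤ 1 := by
        rcases hj with hj | hj
        · have hsub : S.filter (fun z => z = (i, j) ∨ z = (i', j)) ⊆ {(i', j)} := by
            intro z hz
            simp only [Finset.mem_filter] at hz
            obtain ⟨hzS, rfl | rfl⟩ := hz
            · exact absurd hzS hj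
            · simp
          simpa using Finset.card_le_card hsub
        · have hsub : S.filter (fun z => z = (i, j) ∨ z = (i', j)) ⊆ {(i, j)} := by
            intro z hz
            simp only [Finset.mem_filter] at hz
            obtain ⟨hzS, rfl | rfl⟩ := hz
            · simp
            · exact absurd hzS hj
          simpa using Finset.card_le_card hsub
      have := key j
      have := hlow j
      omega
    · push_neg at hall
      have hsub : A \ S = ∅ := by
        rw [Finset.sdiff_eq_empty_iff_subset]
        intro z hz
        rw [hmemA] at hz
        obtain ⟨a, b⟩ := z
        rcases hz with h | h <;> simp at h <;> subst h
        · exact (hall b).1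
        · exact (hall b).2
      simp [hsub]
end

section
/- Let n ≥ 4 and t ∈ [n−1], and let S be a weak (2n−2t−1)-resolving set of K_n × K_n. Then for any i, i' ∈ [n], the number of vertices not in S lying in L_i ∪ L_{i'} is at most 2t+1 if there exists j with both (i,j) ∉ S and (i',j) ∉ S, and at most 2t+2 otherwise. -/
open Finset

lemma key {n : ℕ} (i i' j : Fin n) (h : i ≠ i') (z : Fin n × Fin n) :
    ((dd (i,j) z : ℤ) - (dd (i',j) z : ℤ)).natAbs =
      (if z.1 = i ∨ z.1 = i' then 1 else 0) + (if z = (i,j) then 1 else 0)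
        + (if z = (i',j) then 1 else 0) := by
  obtain ⟨a,b⟩ := z
  have h' : i' ≠ i := h.symm
  rcases eq_or_ne a i with rfl | hai
  · rcases eq_or_ne b j with rfl | hbj
    · simp [dd, Prod.ext_iff, h, h']
    · simp [dd, Prod.ext_iff, h, h', hbj, hbj.symm]
  · rcases eq_or_ne a i' with rfl | hai'
    · rcases eq_or_ne b j with rfl | hbj
      · simp [dd, Prod.ext_iff, h, h', hai]
      · simp [dd, Prod.ext_iff, h, h', hai, hbj, hbj.symm]
    · rcases eq_or_ne b j with rfl | hbj
      · simp [dd, Prod.ext_iff, hai, hai', hai.symm, hai'.symm]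
      · simp [dd, Prod.ext_iff, hai, hai', hbj, hai.symm, hai'.symm, hbj.symm]

lemma delS_eq {n : ℕ} (S : Finset (Fin n × Fin n)) (i i' j : Fin n) (h : i ≠ i') :
    delS S (i,j) (i',j) = (S.filter (fun z => z.1 = i ∨ z.1 = i')).card
      + (if (i,j) ∈ S then 1 else 0) + (if (i',j) ∈ S then 1 else 0) := by
  unfold delS
  rw [Finset.sum_congr rfl (fun z _ => key i i' j h z)]
  rw [Finset.sum_add_distrib, Finset.sum_add_distrib, Finset.card_filter,
    Finset.sum_ite_eq' S ((i,j) : Fin n × Fin n) (fun _ => 1),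
    Finset.sum_ite_eq' S ((i',j) : Fin n × Fin n) (fun _ => 1)]

lemma card_union {n : ℕ} (i i' : Fin n) (h : i ≠ i') :
    (Lv i ∪ Lv i' : Finset (Fin n × Fin n)).card = 2 * n := by
  have h1 : (Lv i : Finset (Fin n × Fin n)) = {i} ×ˢ univ := by
    ext ⟨a,b⟩; simp [Lv, eq_comm]
  have h2 : (Lv i' : Finset (Fin n × Fin n)) = {i'} ×ˢ univ := by
    ext ⟨a,b⟩; simp [Lv, eq_comm]
  have hd : Disjoint (Lv i) (Lv i' : Finset (Fin n × Fin n)) := by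
    rw [Finset.disjoint_left]
    intro p hp hp'
    simp [Lv] at hp hp'
    exact h (hp ▸ hp')
  rw [Finset.card_union_of_disjoint hd, h1, h2]
  simp; ring

lemma filter_inter {n : ℕ} (S : Finset (Fin n × Fin n)) (i i' : Fin n) :
    (S.filter (fun z => z.1 = i ∨ z.1 = i')) = (Lv i ∪ Lv i') ∩ S := by
  ext ⟨a,b⟩; simp [Lv, and_comm]

theorem stmt_14 (n t : ℕ) (hn : 4 ≤ n) (ht : 1 ≤ t) (ht' : t ≤ n - 1)
    (S : Finset (Fin n × Fin n)) (hS : weakRes (2 * n - 2 * t - 1) S)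
    (i i' : Fin n) (hii : i ≠ i') :
    ((∃ j : Fin n, (i, j) ∉ S ∧ (i', j) ∉ S) →
        ((Lv i ∪ Lv i') \ S).card ≤ 2 * t + 1) ∧
    (((Lv i ∪ Lv i') \ S).card ≤ 2 * t + 2) := by
  classical
  set U : Finset (Fin n × Fin n) := Lv i ∪ Lv i' with hU
  have hcard : U.card = 2 * n := card_union i i' hii
  have hsplit : (U \ S).card + (U ∩ S).card = U.card :=
    Finset.card_sdiff_add_card_inter U S
  have hkey : ∀ j : Fin n, 2 * n - 2 * t - 1 ≤
      (U ∩ S).card + (if (i,j) ∈ S then 1 else 0) + (if (i',j) ∈ S then 1 else 0) := by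
    intro j
    have hne : ((i,j) : Fin n × Fin n) ≠ (i',j) := by
      simp [Prod.ext_iff, hii]
    have := hS (i,j) (i',j) hne
    rwa [delS_eq S i i' j hii, _root_.filter_inter] at this
  constructor
  · rintro ⟨j, hj1, hj2⟩
    have := hkey j
    simp only [hj1, hj2, if_neg, ite_false] at this
    omega
  · by_cases hall : ∀ j : Fin n, (i,j) ∈ S ∧ (i',j) ∈ S
    · have : U \ S = ∅ := by
        rw [Finset.sdiff_eq_empty_iff_subset]
        intro p hp
        simp only [hU, Finset.mem_union, Lv, Finset.mem_filter, Finset.mem_univ,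
          true_and] at hp
        rcases hp with hp | hp
        · have := (hall p.2).1
          rwa [← hp, Prod.mk.eta] at this
        · have := (hall p.2).2
          rwa [← hp, Prod.mk.eta] at this
      rw [this]
      simp
    · push_neg at hall
      obtain ⟨j, hj⟩ := hall
      have hk := hkey j
      by_cases h1 : (i,j) ∈ S
      · have h2 : (i',j) ∉ S := hj h1
        simp only [h1, h2, if_pos, ite_false, ite_true] at hk
        omega
      · have hle : (if (i',j) ∈ S then 1 else 0) ≤ 1 := by split <;> omega
        simp only [h1, ite_false] at hk
        omega
end
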